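/- arXiv:math/0610895 — 3 statements merged into one kernel-verified Lean document; each statement's English description precedes it below -/
import Mathlib

section
/- Let à be the subalgebra of U generated by K and K⁻¹, and let W be the subalgebra of B generated by cF + (q^{2m}K^m + H^m)/((q^{2m} − 1)(q − q⁻¹)), KH, and (KH)⁻¹. Then the multiplication map à ⊗_ℂ W → B, a ⊗ w ↦ aw, is a ℂ-linear bijection; in particular, B is free as a right W-module. -/
noncomputable section

open FreeAlgebra

/-- Generators of the quantum group `U_q(f(K,H))`. -/
inductive Gen : Type
  | E | F | K | Kinv | H | Hinv

/-- The free algebra on the generators. -/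
abbrev FA : Type := FreeAlgebra ℂ Gen

def gE : FA := ι ℂ Gen.E
def gF : FA := ι ℂ Gen.F
def gK : FA := ι ℂ Gen.K
def gKi : FA := ι ℂ Gen.Kinv
def gH : FA := ι ℂ Gen.H
def gHi : FA := ι ℂ Gen.Hinv

/-- The defining relations of `U_q(f(K,H))`, where `r` is the element of the free
algebra representing the Laurent polynomial `f(K,H)` appearing in `EF - FE = f(K,H)`. -/
inductive URel (q : ℂ) (r : FA) : FA → FA → Prop
  | KKi : URel q r (gK * gKi) 1
  | KiK : URel q r (gKi * gK) 1
  | HHi : URel q r (gH * gHi) 1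
  | HiH : URel q r (gHi * gH) 1
  | KH  : URel q r (gK * gH) (gH * gK)
  | KE  : URel q r (gK * gE) (q ^ 2 • (gE * gK))
  | KF  : URel q r (gK * gF) ((q ^ 2)⁻¹ • (gF * gK))
  | HE  : URel q r (gH * gE) ((q ^ 2)⁻¹ • (gE * gH))
  | HF  : URel q r (gH * gF) (q ^ 2 • (gF * gH))
  | EF  : URel q r (gE * gF - gF * gE) r

/-- `U_q(f(K,H))` as a quotient of the free algebra. -/
abbrev Uq (q : ℂ) (r : FA) : Type := RingQuot (URel q r)

variable (q : ℂ) (r : FA)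

def uE : Uq q r := RingQuot.mkAlgHom ℂ (URel q r) gE
def uF : Uq q r := RingQuot.mkAlgHom ℂ (URel q r) gF
def uK : Uq q r := RingQuot.mkAlgHom ℂ (URel q r) gK
def uKi : Uq q r := RingQuot.mkAlgHom ℂ (URel q r) gKi
def uH : Uq q r := RingQuot.mkAlgHom ℂ (URel q r) gH
def uHi : Uq q r := RingQuot.mkAlgHom ℂ (URel q r) gHi

/-- The element `f_m(K,H) = (K^m - H^m)/(q - q⁻¹)` of the free algebra. -/
def fm (q : ℂ) (m : ℕ) : FA := (q - q⁻¹)⁻¹ • (gK ^ m - gH ^ m)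

/-- The quantum group `U_q(f_m(K,H))`. -/
abbrev Um (q : ℂ) (m : ℕ) : Type := Uq q (fm q m)

end
open scoped TensorProduct

/-- The subalgebra `B = U_q(F, K^{±1}, H^{±1})` of `U` generated by `F, K, K⁻¹, H, H⁻¹`. -/
noncomputable def Bsub (q : ℂ) (m : ℕ) : Subalgebra ℂ (Um q m) :=
  Algebra.adjoin ℂ ({uF q (fm q m), uK q (fm q m), uKi q (fm q m),
    uH q (fm q m), uHi q (fm q m)} : Set (Um q m))

/-- The element `cF + (q^{2m}K^m + H^m)/((q^{2m} - 1)(q - q⁻¹))`. -/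
noncomputable def OmEta (q : ℂ) (m : ℕ) (c : ℂ) : Um q m :=
  algebraMap ℂ (Um q m) c * uF q (fm q m) +
    ((q ^ (2 * m) - 1) * (q - q⁻¹))⁻¹ •
      (q ^ (2 * m) • uK q (fm q m) ^ m + uH q (fm q m) ^ m)

/-- The subalgebra `W` of `B` generated by
`cF + (q^{2m}K^m + H^m)/((q^{2m} - 1)(q - q⁻¹))`, `KH` and `(KH)⁻¹`. -/
noncomputable def Wsub (q : ℂ) (m : ℕ) (c : ℂ) : Subalgebra ℂ (Um q m) :=
  Algebra.adjoin ℂ ({OmEta q m c, uK q (fm q m) * uH q (fm q m),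
    uKi q (fm q m) * uHi q (fm q m)} : Set (Um q m))

/-- The subalgebra `Ã` of `U` generated by `K` and `K⁻¹`. -/
noncomputable def Atilde (q : ℂ) (m : ℕ) : Subalgebra ℂ (Um q m) :=
  Algebra.adjoin ℂ ({uK q (fm q m), uKi q (fm q m)} : Set (Um q m))

/-- The multiplication map `Ã ⊗_ℂ W → U`, `a ⊗ w ↦ a * w`. -/
noncomputable def mulMap (q : ℂ) (m : ℕ) (c : ℂ) :
    (Atilde q m ⊗[ℂ] Wsub q m c) →ₗ[ℂ] Um q m :=
  TensorProduct.lift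
    (((LinearMap.mul ℂ (Um q m)).comp (Atilde q m).val.toLinearMap).compl₂
      (Wsub q m c).val.toLinearMap)


-- ==================== auxiliary development ====================
namespace St15

noncomputable section

/-! ### A Verma-type module for `Um q m` -/

abbrev V : Type := (ℕ × ℤ × ℤ) →₀ ℂ

def bv (p : ℕ × ℤ × ℤ) : V := Finsupp.single p 1

def opc (w : ℕ × ℤ × ℤ → V) : V →ₗ[ℂ] V :=
  Finsupp.lsum ℂ (fun p => LinearMap.toSpanSingleton ℂ V (w p))

@[simp] lemma opc_single (w : ℕ × ℤ × ℤ → V) (p : ℕ × ℤ × ℤ) (b : ℂ) :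
    opc w (Finsupp.single p b) = b • w p := by
  simp [opc, LinearMap.toSpanSingleton_apply]

variable (q : ℂ) (m : ℕ)

def oF : Module.End ℂ V := opc fun p => bv (p.1 + 1, p.2.1, p.2.2)
def oK : Module.End ℂ V := opc fun p => ((q ^ 2)⁻¹) ^ p.1 • bv (p.1, p.2.1 + 1, p.2.2)
def oKi : Module.End ℂ V := opc fun p => (q ^ 2) ^ p.1 • bv (p.1, p.2.1 - 1, p.2.2)
def oH : Module.End ℂ V := opc fun p => (q ^ 2) ^ p.1 • bv (p.1, p.2.1, p.2.2 + 1)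
def oHi : Module.End ℂ V := opc fun p => ((q ^ 2)⁻¹) ^ p.1 • bv (p.1, p.2.1, p.2.2 - 1)
def AA : ℕ → ℂ := fun i => ∑ t ∈ Finset.range i, ((q ^ (2 * m))⁻¹) ^ t
def BB : ℕ → ℂ := fun i => ∑ t ∈ Finset.range i, (q ^ (2 * m)) ^ t
def oE : Module.End ℂ V := opc fun p =>
  (q - q⁻¹)⁻¹ • (AA q m p.1 • bv (p.1 - 1, p.2.1 + m, p.2.2)
    - BB q m p.1 • bv (p.1 - 1, p.2.1, p.2.2 + m))

lemma endext {f g : Module.End ℂ V} (h : ∀ p, f (bv p) = g (bv p)) : f = g := by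
  refine Finsupp.lhom_ext fun p b => ?_
  have : (Finsupp.single p b : V) = b • bv p := by simp [bv]
  rw [this, map_smul, map_smul, h]

lemma q2i (hq0 : q ≠ 0) (i : ℕ) : (q ^ 2) ^ i * ((q^2)⁻¹) ^ i = 1 := by
  rw [inv_pow, mul_inv_cancel₀ (pow_ne_zero i (pow_ne_zero 2 hq0))]
lemma q2i' (hq0 : q ≠ 0) (i : ℕ) : ((q^2)⁻¹) ^ i * (q ^ 2) ^ i = 1 := by
  rw [inv_pow, inv_mul_cancel₀ (pow_ne_zero i (pow_ne_zero 2 hq0))]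

lemma rel_KKi (hq0 : q ≠ 0) : oK q * oKi q = 1 := by
  apply endext; rintro ⟨i, a, b⟩
  rw [Module.End.mul_apply]
  simp only [oK, oKi, bv, opc_single, one_smul, map_smul, smul_smul, Module.End.one_apply, one_mul]
  rw [q2i q hq0]; simp
lemma rel_KiK (hq0 : q ≠ 0) : oKi q * oK q = 1 := by
  apply endext; rintro ⟨i, a, b⟩
  rw [Module.End.mul_apply]
  simp only [oK, oKi, bv, opc_single, one_smul, map_smul, smul_smul, Module.End.one_apply, one_mul]
  rw [q2i' q hq0]; simp
lemma rel_HHi (hq0 : q ≠ 0) : oH q * oHi q = 1 := by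
  apply endext; rintro ⟨i, a, b⟩
  rw [Module.End.mul_apply]
  simp only [oH, oHi, bv, opc_single, one_smul, map_smul, smul_smul, Module.End.one_apply, one_mul]
  rw [q2i' q hq0]; simp
lemma rel_HiH (hq0 : q ≠ 0) : oHi q * oH q = 1 := by
  apply endext; rintro ⟨i, a, b⟩
  rw [Module.End.mul_apply]
  simp only [oH, oHi, bv, opc_single, one_smul, map_smul, smul_smul, Module.End.one_apply, one_mul]
  rw [q2i q hq0]; simp
lemma rel_KH : oK q * oH q = oH q * oK q := by
  apply endext; rintro ⟨i, a, b⟩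
  simp only [Module.End.mul_apply, oK, oH, bv, opc_single, one_smul, map_smul, smul_smul]
  ring_nf
lemma rel_KF : oK q * oF = (q^2)⁻¹ • (oF * oK q) := by
  apply endext; rintro ⟨i, a, b⟩
  simp only [Module.End.mul_apply, LinearMap.smul_apply, oK, oF, bv, opc_single, one_smul,
    map_smul, smul_smul, pow_succ]
  ring_nf
lemma rel_HF : oH q * oF = q^2 • (oF * oH q) := by
  apply endext; rintro ⟨i, a, b⟩
  simp only [Module.End.mul_apply, LinearMap.smul_apply, oH, oF, bv, opc_single, one_smul,
    map_smul, smul_smul, pow_succ]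
  ring_nf
lemma rel_KE (hq0 : q ≠ 0) : oK q * oE q m = q^2 • (oE q m * oK q) := by
  apply endext; rintro ⟨i, a, b⟩
  simp only [Module.End.mul_apply, LinearMap.smul_apply, oK, oE, bv, opc_single, one_smul,
    map_smul, map_sub, smul_sub, smul_smul]
  cases i with
  | zero => simp [AA, BB]
  | succ n =>
      have h1 : (q^2) * ((q^2)⁻¹)^(n+1) = ((q^2)⁻¹)^n := by
        rw [pow_succ ((q^2)⁻¹) n, ← mul_assoc, mul_comm (q^2), mul_assoc,
          mul_inv_cancel₀ (pow_ne_zero 2 hq0), mul_one]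
      simp only [Nat.add_sub_cancel]
      rw [show a + (m:ℤ) + 1 = a + 1 + m by ring]
      congr 1
      · congr 1
        rw [← h1]; ring
      · congr 1
        rw [← h1]; ring
lemma rel_HE (hq0 : q ≠ 0) : oH q * oE q m = (q^2)⁻¹ • (oE q m * oH q) := by
  apply endext; rintro ⟨i, a, b⟩
  simp only [Module.End.mul_apply, LinearMap.smul_apply, oH, oE, bv, opc_single, one_smul,
    map_smul, map_sub, smul_sub, smul_smul]
  cases i with
  | zero => simp [AA, BB]
  | succ n =>
      have h1 : (q^2)⁻¹ * ((q^2))^(n+1) = ((q^2))^n := by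
        rw [pow_succ (q^2) n, ← mul_assoc, mul_comm ((q^2)⁻¹), mul_assoc,
          inv_mul_cancel₀ (pow_ne_zero 2 hq0), mul_one]
      simp only [Nat.add_sub_cancel]
      rw [show b + (m:ℤ) + 1 = b + 1 + m by ring]
      congr 1
      · congr 1
        rw [← h1]; ring
      · congr 1
        rw [← h1]; ring

lemma oK_pow_bv (n : ℕ) (i : ℕ) (a b : ℤ) :
    (oK q ^ n) (bv (i, a, b)) = (((q^2)⁻¹)^i)^n • bv (i, a + n, b) := by
  induction n generalizing a with
  | zero => simp
  | succ k ih =>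
      rw [pow_succ, Module.End.mul_apply]
      have h2 : (oK q) (bv (i,a,b)) = ((q^2)⁻¹)^i • bv (i, a+1, b) := by
        simp [oK, bv]
      rw [h2, map_smul, ih, smul_smul]
      rw [show a + 1 + (k:ℤ) = a + ((k:ℤ)+1) by ring]
      push_cast
      congr 1
      ring
lemma oH_pow_bv (n : ℕ) (i : ℕ) (a b : ℤ) :
    (oH q ^ n) (bv (i, a, b)) = (((q^2))^i)^n • bv (i, a, b + n) := by
  induction n generalizing b with
  | zero => simp
  | succ k ih =>
      rw [pow_succ, Module.End.mul_apply]
      have h2 : (oH q) (bv (i,a,b)) = ((q^2))^i • bv (i, a, b+1) := by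
        simp [oH, bv]
      rw [h2, map_smul, ih, smul_smul]
      rw [show b + 1 + (k:ℤ) = b + ((k:ℤ)+1) by ring]
      push_cast
      congr 1
      ring
lemma oKi_pow_bv (n : ℕ) (i : ℕ) (a b : ℤ) :
    (oKi q ^ n) (bv (i, a, b)) = (((q^2))^i)^n • bv (i, a - n, b) := by
  induction n generalizing a with
  | zero => simp
  | succ k ih =>
      rw [pow_succ, Module.End.mul_apply]
      have h2 : (oKi q) (bv (i,a,b)) = ((q^2))^i • bv (i, a-1, b) := by
        simp [oKi, bv]
      rw [h2, map_smul, ih, smul_smul]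
      rw [show a - 1 - (k:ℤ) = a - ((k:ℤ)+1) by ring]
      push_cast
      congr 1
      ring
lemma oHi_pow_bv (n : ℕ) (i : ℕ) (a b : ℤ) :
    (oHi q ^ n) (bv (i, a, b)) = (((q^2)⁻¹)^i)^n • bv (i, a, b - n) := by
  induction n generalizing b with
  | zero => simp
  | succ k ih =>
      rw [pow_succ, Module.End.mul_apply]
      have h2 : (oHi q) (bv (i,a,b)) = ((q^2)⁻¹)^i • bv (i, a, b-1) := by
        simp [oHi, bv]
      rw [h2, map_smul, ih, smul_smul]
      rw [show b - 1 - (k:ℤ) = b - ((k:ℤ)+1) by ring]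
      push_cast
      congr 1
      ring
lemma oF_pow_bv (n : ℕ) (i : ℕ) (a b : ℤ) :
    (oF ^ n) (bv (i, a, b)) = bv (i + n, a, b) := by
  induction n generalizing i with
  | zero => simp
  | succ k ih =>
      rw [pow_succ, Module.End.mul_apply]
      have h2 : oF (bv (i,a,b)) = bv (i+1, a, b) := by simp [oF, bv]
      rw [h2, ih, show i + 1 + k = i + (k+1) by ring]

lemma rel_EF : oE q m * oF - oF * oE q m
    = (q - q⁻¹)⁻¹ • (oK q ^ m - oH q ^ m) := by
  apply endext; rintro ⟨i, a, b⟩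
  simp only [LinearMap.sub_apply, Module.End.mul_apply, LinearMap.smul_apply]
  have hF : ∀ i' (a' b' : ℤ), oF (bv (i',a',b')) = bv (i'+1,a',b') := by
    intro i' a' b'; simp [oF, bv]
  have hE : ∀ i' (a' b' : ℤ), oE q m (bv (i',a',b'))
      = (q-q⁻¹)⁻¹ • (AA q m i' • bv (i'-1, a'+m, b') - BB q m i' • bv (i'-1, a', b'+m)) := by
    intro i' a' b'; simp [oE, bv]
  rw [oK_pow_bv, oH_pow_bv, hF, hE, hE, map_smul, map_sub, map_smul, map_smul, hF, hF]
  cases i with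
  | zero => simp [AA, BB]
  | succ n =>
      simp only [Nat.add_sub_cancel]
      rw [show AA q m (n+1+1) = AA q m (n+1) + ((q^(2*m))⁻¹)^(n+1) by
            simp [AA, Finset.sum_range_succ],
          show BB q m (n+1+1) = BB q m (n+1) + ((q^(2*m)))^(n+1) by
            simp [BB, Finset.sum_range_succ],
          show ((q^2)⁻¹ ^ (n+1))^m = ((q^(2*m))⁻¹)^(n+1) by
            simp only [inv_pow, ← pow_mul]; rw [show 2*(n+1)*m = 2*m*(n+1) by ring],
          show ((q^2) ^ (n+1))^m = ((q^(2*m)))^(n+1) by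
            simp only [← pow_mul]; rw [show 2*(n+1)*m = 2*m*(n+1) by ring]]
      module

/-! ### The representation -/

def phi : FA →ₐ[ℂ] Module.End ℂ V :=
  FreeAlgebra.lift ℂ (fun g => match g with
    | Gen.E => oE q m | Gen.F => oF | Gen.K => oK q | Gen.Kinv => oKi q
    | Gen.H => oH q | Gen.Hinv => oHi q)

@[simp] lemma phi_gE : phi q m gE = oE q m := FreeAlgebra.lift_ι_apply _ _
@[simp] lemma phi_gF : phi q m gF = oF := FreeAlgebra.lift_ι_apply _ _
@[simp] lemma phi_gK : phi q m gK = oK q := FreeAlgebra.lift_ι_apply _ _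
@[simp] lemma phi_gKi : phi q m gKi = oKi q := FreeAlgebra.lift_ι_apply _ _
@[simp] lemma phi_gH : phi q m gH = oH q := FreeAlgebra.lift_ι_apply _ _
@[simp] lemma phi_gHi : phi q m gHi = oHi q := FreeAlgebra.lift_ι_apply _ _

lemma phi_rel (hq0 : q ≠ 0) :
    ∀ ⦃x y : FA⦄, URel q (fm q m) x y → phi q m x = phi q m y := by
  rintro x y h
  cases h with
  | KKi => simp only [map_mul, map_one, phi_gK, phi_gKi]; exact rel_KKi q hq0
  | KiK => simp only [map_mul, map_one, phi_gK, phi_gKi]; exact rel_KiK q hq0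
  | HHi => simp only [map_mul, map_one, phi_gH, phi_gHi]; exact rel_HHi q hq0
  | HiH => simp only [map_mul, map_one, phi_gH, phi_gHi]; exact rel_HiH q hq0
  | KH => simp only [map_mul, phi_gK, phi_gH]; exact rel_KH q
  | KE => simp only [map_mul, map_smul, phi_gK, phi_gE]; exact rel_KE q m hq0
  | KF => simp only [map_mul, map_smul, phi_gK, phi_gF]; exact rel_KF q
  | HE => simp only [map_mul, map_smul, phi_gH, phi_gE]; exact rel_HE q m hq0
  | HF => simp only [map_mul, map_smul, phi_gH, phi_gF]; exact rel_HF q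
  | EF =>
      simp only [map_mul, map_sub, phi_gE, phi_gF]
      rw [fm, map_smul, map_sub, map_pow, map_pow, phi_gK, phi_gH]
      exact rel_EF q m

def rho (hq0 : q ≠ 0) : Um q m →ₐ[ℂ] Module.End ℂ V :=
  RingQuot.liftAlgHom ℂ ⟨phi q m, phi_rel q m hq0⟩

variable (hq0 : q ≠ 0)

@[simp] lemma rho_uE : rho q m hq0 (uE q (fm q m)) = oE q m := by
  rw [uE, rho, RingQuot.liftAlgHom_mkAlgHom_apply]; simp
@[simp] lemma rho_uF : rho q m hq0 (uF q (fm q m)) = oF := by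
  rw [uF, rho, RingQuot.liftAlgHom_mkAlgHom_apply]; simp
@[simp] lemma rho_uK : rho q m hq0 (uK q (fm q m)) = oK q := by
  rw [uK, rho, RingQuot.liftAlgHom_mkAlgHom_apply]; simp
@[simp] lemma rho_uKi : rho q m hq0 (uKi q (fm q m)) = oKi q := by
  rw [uKi, rho, RingQuot.liftAlgHom_mkAlgHom_apply]; simp
@[simp] lemma rho_uH : rho q m hq0 (uH q (fm q m)) = oH q := by
  rw [uH, rho, RingQuot.liftAlgHom_mkAlgHom_apply]; simp
@[simp] lemma rho_uHi : rho q m hq0 (uHi q (fm q m)) = oHi q := by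
  rw [uHi, rho, RingQuot.liftAlgHom_mkAlgHom_apply]; simp


/-! ### Elements and units of `Um q m` -/

section UmAlg
variable (q : ℂ) (m : ℕ)

def vE : Um q m := uE q (fm q m)
def vF : Um q m := uF q (fm q m)
def vK : Um q m := uK q (fm q m)
def vKi : Um q m := uKi q (fm q m)
def vH : Um q m := uH q (fm q m)
def vHi : Um q m := uHi q (fm q m)

lemma um_KKi : vK q m * vKi q m = 1 := by
  rw [vK, vKi, uK, uKi, ← map_mul, ← map_one (RingQuot.mkAlgHom ℂ (URel q (fm q m)))]
  exact RingQuot.mkAlgHom_rel ℂ URel.KKi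
lemma um_KiK : vKi q m * vK q m = 1 := by
  rw [vK, vKi, uK, uKi, ← map_mul, ← map_one (RingQuot.mkAlgHom ℂ (URel q (fm q m)))]
  exact RingQuot.mkAlgHom_rel ℂ URel.KiK
lemma um_HHi : vH q m * vHi q m = 1 := by
  rw [vH, vHi, uH, uHi, ← map_mul, ← map_one (RingQuot.mkAlgHom ℂ (URel q (fm q m)))]
  exact RingQuot.mkAlgHom_rel ℂ URel.HHi
lemma um_HiH : vHi q m * vH q m = 1 := by
  rw [vH, vHi, uH, uHi, ← map_mul, ← map_one (RingQuot.mkAlgHom ℂ (URel q (fm q m)))]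
  exact RingQuot.mkAlgHom_rel ℂ URel.HiH
lemma um_KH : vK q m * vH q m = vH q m * vK q m := by
  rw [vK, vH, uK, uH, ← map_mul, ← map_mul]
  exact RingQuot.mkAlgHom_rel ℂ URel.KH
lemma um_KF : vK q m * vF q m = (q^2)⁻¹ • (vF q m * vK q m) := by
  rw [vK, vF, uK, uF, ← map_mul, ← map_mul, ← map_smul]
  exact RingQuot.mkAlgHom_rel ℂ URel.KF
lemma um_HF : vH q m * vF q m = (q^2) • (vF q m * vH q m) := by
  rw [vH, vF, uH, uF, ← map_mul, ← map_mul, ← map_smul]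
  exact RingQuot.mkAlgHom_rel ℂ URel.HF

lemma um_FK (hq0 : q ≠ 0) : vF q m * vK q m = (q^2) • (vK q m * vF q m) := by
  rw [um_KF, smul_smul, mul_inv_cancel₀ (pow_ne_zero 2 hq0), one_smul]
lemma um_FH (hq0 : q ≠ 0) : vF q m * vH q m = (q^2)⁻¹ • (vH q m * vF q m) := by
  rw [um_HF, smul_smul, inv_mul_cancel₀ (pow_ne_zero 2 hq0), one_smul]

def κu : (Um q m)ˣ := ⟨vK q m, vKi q m, um_KKi q m, um_KiK q m⟩
def ηu : (Um q m)ˣ := ⟨vH q m, vHi q m, um_HHi q m, um_HiH q m⟩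

lemma comm_κη : Commute (κu q m) (ηu q m) := by
  apply Units.ext
  simpa [κu, ηu] using um_KH q m

def θu : (Um q m)ˣ := κu q m * ηu q m

@[simp] lemma θu_val : (θu q m : Um q m) = vK q m * vH q m := rfl
@[simp] lemma θu_inv_val : ((θu q m)⁻¹ : (Um q m)ˣ).val = vHi q m * vKi q m := by
  rw [θu, mul_inv_rev]; rfl

def Kz (j : ℤ) : Um q m := ↑(κu q m ^ j)
def Tz (k : ℤ) : Um q m := ↑(θu q m ^ k)

@[simp] lemma Kz_zero : Kz q m 0 = 1 := by simp [Kz]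
@[simp] lemma Kz_one : Kz q m 1 = vK q m := by simp [Kz]; rfl
@[simp] lemma Tz_zero : Tz q m 0 = 1 := by simp [Tz]
@[simp] lemma Tz_one : Tz q m 1 = vK q m * vH q m := by simp [Tz]

lemma Kz_add (j j' : ℤ) : Kz q m (j + j') = Kz q m j * Kz q m j' := by
  rw [Kz, Kz, Kz, zpow_add, Units.val_mul]
lemma Tz_add (k k' : ℤ) : Tz q m (k + k') = Tz q m k * Tz q m k' := by
  rw [Tz, Tz, Tz, zpow_add, Units.val_mul]
lemma Kz_natCast (n : ℕ) : Kz q m n = vK q m ^ n := by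
  rw [Kz, zpow_natCast, Units.val_pow_eq_pow_val]; rfl
lemma Kz_negCast (n : ℕ) : Kz q m (-(n:ℤ)) = vKi q m ^ n := by
  rw [Kz, zpow_neg, ← inv_zpow, zpow_natCast, Units.val_pow_eq_pow_val]; rfl
lemma Tz_natCast (n : ℕ) : Tz q m n = (vK q m * vH q m) ^ n := by
  rw [Tz, zpow_natCast, Units.val_pow_eq_pow_val, θu_val]
lemma Tz_negCast (n : ℕ) : Tz q m (-(n:ℤ)) = (vHi q m * vKi q m) ^ n := by
  rw [Tz, zpow_neg, ← inv_zpow, zpow_natCast, Units.val_pow_eq_pow_val, θu_inv_val]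
lemma Kz_succ (j : ℤ) : Kz q m (j + 1) = Kz q m j * vK q m := by
  rw [Kz_add, Kz_one]
lemma Kz_pred (j : ℤ) : Kz q m (j - 1) = Kz q m j * vKi q m := by
  rw [sub_eq_add_neg, Kz_add, show (-1 : ℤ) = -((1:ℕ):ℤ) by norm_num, Kz_negCast, pow_one]

lemma Kz_neg_one : Kz q m (-1) = vKi q m := by
  rw [Kz, zpow_neg_one]; rfl
lemma Tz_neg_one : Tz q m (-1) = vHi q m * vKi q m := by
  rw [Tz, zpow_neg_one, θu_inv_val]

lemma comm_KzTz (j k : ℤ) : Commute (Kz q m j) (Tz q m k) := by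
  have h : Commute (κu q m) (θu q m) := (Commute.refl _).mul_right (comm_κη q m)
  have h2 : Commute (κu q m ^ j) (θu q m ^ k) := h.zpow_zpow j k
  have h3 := Commute.map h2 (Units.coeHom (Um q m))
  simpa [Kz, Tz] using h3

end UmAlg


/-! ### `OmEta` and its commutation with `K`-powers -/

section OmSec
variable (q : ℂ) (m : ℕ)

def eta (q : ℂ) (m : ℕ) : ℂ := ((q^(2*m) - 1)*(q - q⁻¹))⁻¹

lemma comm_KiK : Commute (vKi q m) (vK q m) := by
  unfold Commute SemiconjBy; rw [um_KiK, um_KKi]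
lemma comm_KiH : Commute (vKi q m) (vH q m) := by
  have h := ((comm_κη q m).inv_left).map (Units.coeHom (Um q m))
  simpa [κu, ηu] using h
lemma comm_KH' : Commute (vK q m) (vH q m) := um_KH q m
lemma comm_Kθ : Commute (vK q m) (vK q m * vH q m) :=
  (Commute.refl _).mul_right (comm_KH' q m)
lemma comm_Hθ : Commute (vH q m) (vK q m * vH q m) :=
  ((comm_KH' q m).symm).mul_right (Commute.refl _)
lemma comm_Kiθ : Commute (vKi q m) (vK q m * vH q m) :=
  (comm_KiK q m).mul_right (comm_KiH q m)

lemma comm_KTz (k : ℤ) : Commute (vK q m) (Tz q m k) :=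
  Commute.units_zpow_right (u := θu q m) (comm_Kθ q m) k
lemma comm_KiTz (k : ℤ) : Commute (vKi q m) (Tz q m k) :=
  Commute.units_zpow_right (u := θu q m) (comm_Kiθ q m) k

lemma vHm_eq : Kz q m (-(m:ℤ)) * Tz q m m = vH q m ^ m := by
  rw [Tz_natCast, (comm_KH' q m).mul_pow, ← mul_assoc, ← Kz_natCast, ← Kz_add]
  simp

lemma Om_def2 (c : ℂ) : OmEta q m c
    = c • vF q m + eta q m • ((q^(2*m)) • Kz q m m + Kz q m (-(m:ℤ)) * Tz q m m) := by
  rw [OmEta, eta, vHm_eq q m, Kz_natCast, ← Algebra.smul_def]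
  rfl

lemma comm_Fθ (hq0 : q ≠ 0) : Commute (vF q m) (vK q m * vH q m) := by
  symm
  show (vK q m * vH q m) * vF q m = vF q m * (vK q m * vH q m)
  calc (vK q m * vH q m) * vF q m = vK q m * (vH q m * vF q m) := by rw [mul_assoc]
    _ = vK q m * ((q^2) • (vF q m * vH q m)) := by rw [um_HF]
    _ = (q^2) • (vK q m * (vF q m * vH q m)) := (mul_smul_comm _ _ _)
    _ = (q^2) • ((vK q m * vF q m) * vH q m) := by rw [mul_assoc]
    _ = (q^2) • (((q^2)⁻¹ • (vF q m * vK q m)) * vH q m) := by rw [um_KF]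
    _ = ((q^2) * (q^2)⁻¹) • ((vF q m * vK q m) * vH q m) := by
        rw [smul_mul_assoc, smul_smul]
    _ = vF q m * (vK q m * vH q m) := by
        rw [mul_inv_cancel₀ (pow_ne_zero 2 hq0), one_smul, mul_assoc]

lemma comm_Omθ (hq0 : q ≠ 0) (c : ℂ) :
    Commute (OmEta q m c) (vK q m * vH q m) := by
  rw [Om_def2]
  refine Commute.add_left ((comm_Fθ q m hq0).smul_left c) (Commute.smul_left ?_ _)
  refine Commute.add_left (Commute.smul_left ?_ _) ?_
  · have : Commute (vK q m ^ m) (vK q m * vH q m) := (comm_Kθ q m).pow_left m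
    rwa [← Kz_natCast] at this
  · have h1 : Commute (Kz q m (-(m:ℤ))) (vK q m * vH q m) := by
      have : Commute (vKi q m ^ m) (vK q m * vH q m) := (comm_Kiθ q m).pow_left m
      rwa [← Kz_negCast] at this
    have h2 : Commute (Tz q m m) (vK q m * vH q m) := by
      have h3 := Commute.units_zpow_left (a := (θu q m : Um q m)) (Commute.refl _) (m:ℤ)
      simpa [Tz] using h3
    exact h1.mul_left h2
  
lemma comm_OmTz (hq0 : q ≠ 0) (c : ℂ) (k : ℤ) :
    Commute (OmEta q m c) (Tz q m k) :=
  Commute.units_zpow_right (u := θu q m) (comm_Omθ q m hq0 c) k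

end OmSec


section OmKzSec
variable (q : ℂ) (m : ℕ)

/-- The correction term in the commutation of `Ω` past `K`-powers. -/
def Rj (j : ℤ) : Um q m :=
  (q^(2*m)) • Kz q m (j+m) + Kz q m (j-m) * Tz q m m

lemma OmK1 (hq0 : q ≠ 0) (c : ℂ) :
    OmEta q m c * vK q m
      = (q^2) • (vK q m * OmEta q m c) + (eta q m * (1 - q^2)) • Rj q m 1 := by
  rw [Om_def2, Rj]
  simp only [add_mul, mul_add, smul_mul_assoc, mul_smul_comm, smul_add, smul_smul]
  rw [um_FK q m hq0]
  rw [show Kz q m (m:ℤ) * vK q m = Kz q m (1+m) from by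
        rw [← Kz_succ, show ((m:ℤ)+1) = 1+(m:ℤ) by ring]]
  rw [show Kz q m (-(m:ℤ)) * Tz q m (m:ℤ) * vK q m = Kz q m (1-(m:ℤ)) * Tz q m m from by
        rw [mul_assoc, ← (comm_KTz q m (m:ℤ)).eq, ← mul_assoc, ← Kz_one (q := q) (m := m),
          ← Kz_add, show (-(m:ℤ)+1) = 1-(m:ℤ) by ring]]
  rw [show vK q m * Kz q m (m:ℤ) = Kz q m (1+m) from by
        rw [← Kz_one (q := q) (m := m), ← Kz_add]]
  rw [show vK q m * (Kz q m (-(m:ℤ)) * Tz q m (m:ℤ)) = Kz q m (1-(m:ℤ)) * Tz q m m from by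
        rw [← mul_assoc, ← Kz_one (q := q) (m := m), ← Kz_add, show (1+(-(m:ℤ))) = 1-(m:ℤ) by ring]]
  module

lemma OmKm1 (hq0 : q ≠ 0) (c : ℂ) :
    OmEta q m c * vKi q m
      = (q^2)⁻¹ • (vKi q m * OmEta q m c) + (eta q m * (1 - (q^2)⁻¹)) • Rj q m (-1) := by
  have um_FKi : vF q m * vKi q m = (q^2)⁻¹ • (vKi q m * vF q m) := by
    calc vF q m * vKi q m = (vKi q m * vK q m) * vF q m * vKi q m := by rw [um_KiK, one_mul]
      _ = vKi q m * (vK q m * vF q m) * vKi q m := by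
          rw [mul_assoc (vKi q m) (vK q m) (vF q m)]
      _ = vKi q m * ((q^2)⁻¹ • (vF q m * vK q m)) * vKi q m := by rw [um_KF]
      _ = (q^2)⁻¹ • (vKi q m * (vF q m * (vK q m * vKi q m))) := by
          rw [mul_smul_comm, smul_mul_assoc, mul_assoc, mul_assoc]
      _ = (q^2)⁻¹ • (vKi q m * vF q m) := by rw [um_KKi, mul_one]
  rw [Om_def2, Rj]
  simp only [add_mul, mul_add, smul_mul_assoc, mul_smul_comm, smul_add, smul_smul]
  rw [um_FKi]
  rw [show Kz q m (m:ℤ) * vKi q m = Kz q m (-1+m) from by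
        rw [← Kz_pred, show ((m:ℤ)-1) = -1+(m:ℤ) by ring]]
  rw [show Kz q m (-(m:ℤ)) * Tz q m (m:ℤ) * vKi q m = Kz q m (-1-(m:ℤ)) * Tz q m m from by
        rw [mul_assoc, ← (comm_KiTz q m (m:ℤ)).eq, ← mul_assoc, ← Kz_pred,
          show (-(m:ℤ)-1) = -1-(m:ℤ) by ring]]
  rw [show vKi q m * Kz q m (m:ℤ) = Kz q m (-1+m) from by
        rw [show vKi q m = Kz q m (-1) from by
              rw [show (-1:ℤ) = -((1:ℕ):ℤ) by norm_num, Kz_negCast, pow_one],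
          ← Kz_add]]
  rw [show vKi q m * (Kz q m (-(m:ℤ)) * Tz q m (m:ℤ)) = Kz q m (-1-(m:ℤ)) * Tz q m m from by
        rw [← mul_assoc, show vKi q m = Kz q m (-1) from by
              rw [show (-1:ℤ) = -((1:ℕ):ℤ) by norm_num, Kz_negCast, pow_one],
          ← Kz_add, show (-1+(-(m:ℤ))) = -1-(m:ℤ) by ring]]
  module

lemma OmKz (hq0 : q ≠ 0) (c : ℂ) (j : ℤ) :
    OmEta q m c * Kz q m j
      = ((q^2)^j) • (Kz q m j * OmEta q m c)
        + (eta q m * (1 - (q^2)^j)) • Rj q m j := by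
  induction j using Int.induction_on with
  | zero => simp [Rj]
  | succ n ih =>
      have hq2 : (q:ℂ)^2 ≠ 0 := pow_ne_zero 2 hq0
      rw [Kz_succ, ← mul_assoc, ih]
      rw [add_mul, smul_mul_assoc, smul_mul_assoc, mul_assoc, OmK1 q m hq0 c]
      rw [Rj, Rj, add_mul, smul_mul_assoc]
      rw [show Kz q m ((n:ℤ)+m) * vK q m = Kz q m ((n+1:ℤ)+m) from by
            rw [← Kz_succ, show ((n:ℤ)+m+1) = ((n+1:ℤ)+m) by ring]]
      rw [show Kz q m ((n:ℤ)-m) * Tz q m m * vK q m = Kz q m ((n+1:ℤ)-m) * Tz q m m from by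
            rw [mul_assoc, ← (comm_KTz q m (m:ℤ)).eq, ← mul_assoc, ← Kz_succ,
              show ((n:ℤ)-m+1) = ((n+1:ℤ)-m) by ring]]
      rw [mul_add, mul_smul_comm, mul_smul_comm]
      rw [show Kz q m (n:ℤ) * (vK q m * OmEta q m c) = Kz q m ((n:ℤ)+1) * OmEta q m c from by
            rw [← mul_assoc, ← Kz_succ]]
      rw [Rj, mul_add, mul_smul_comm]
      rw [show Kz q m (n:ℤ) * Kz q m (1+m) = Kz q m ((n+1:ℤ)+m) from by
            rw [← Kz_add, show ((n:ℤ)+(1+m)) = ((n+1:ℤ)+m) by ring]]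
      rw [show Kz q m (n:ℤ) * (Kz q m (1-(m:ℤ)) * Tz q m m) = Kz q m ((n+1:ℤ)-m) * Tz q m m from by
            rw [← mul_assoc, ← Kz_add, show ((n:ℤ)+(1-(m:ℤ))) = ((n+1:ℤ)-m) by ring]]
      rw [show ((q:ℂ)^2)^((n:ℤ)+1) = ((q:ℂ)^2)^(n:ℤ) * (q^2) from by
            rw [zpow_add_one₀ hq2]]
      rw [← Kz_succ q m (n:ℤ)]
      module
  | pred n ih =>
      have hq2 : (q:ℂ)^2 ≠ 0 := pow_ne_zero 2 hq0
      rw [show (-(n:ℤ)-1) = (-(n:ℤ))-1 by ring, Kz_pred, ← mul_assoc, ih]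
      rw [add_mul, smul_mul_assoc, smul_mul_assoc, mul_assoc, OmKm1 q m hq0 c]
      rw [Rj, Rj, add_mul, smul_mul_assoc]
      rw [show Kz q m (-(n:ℤ)+m) * vKi q m = Kz q m ((-(n:ℤ)-1)+m) from by
            rw [← Kz_pred, show (-(n:ℤ)+m-1) = (-(n:ℤ)-1)+m by ring]]
      rw [show Kz q m (-(n:ℤ)-m) * Tz q m m * vKi q m = Kz q m ((-(n:ℤ)-1)-m) * Tz q m m from by
            rw [mul_assoc, ← (comm_KiTz q m (m:ℤ)).eq, ← mul_assoc, ← Kz_pred,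
              show (-(n:ℤ)-m-1) = (-(n:ℤ)-1)-m by ring]]
      rw [mul_add, mul_smul_comm, mul_smul_comm]
      rw [show Kz q m (-(n:ℤ)) * (vKi q m * OmEta q m c) = Kz q m (-(n:ℤ)-1) * OmEta q m c from by
            rw [← mul_assoc, ← Kz_pred]]
      rw [Rj, mul_add, mul_smul_comm]
      rw [show Kz q m (-(n:ℤ)) * Kz q m (-1+m) = Kz q m ((-(n:ℤ)-1)+m) from by
            rw [← Kz_add, show (-(n:ℤ)+(-1+m)) = (-(n:ℤ)-1)+m by ring]]
      rw [show Kz q m (-(n:ℤ)) * (Kz q m (-1-(m:ℤ)) * Tz q m m) = Kz q m ((-(n:ℤ)-1)-m) * Tz q m m from by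
            rw [← mul_assoc, ← Kz_add, show (-(n:ℤ)+(-1-(m:ℤ))) = (-(n:ℤ)-1)-m by ring]]
      rw [show ((q:ℂ)^2)^(-(n:ℤ)-1) = ((q:ℂ)^2)^(-(n:ℤ)) * (q^2)⁻¹ from by
            rw [zpow_sub_one₀ hq2]]
      rw [← Kz_pred q m (-(n:ℤ))]
      module

end OmKzSec


/-! ### The span of the products `K^j Ω^i (KH)^k` -/

section SpanSec
variable (q : ℂ) (m : ℕ) (c : ℂ)

def Gfam : ℕ × ℤ × ℤ → Um q m := fun p =>
  Kz q m p.2.1 * (OmEta q m c ^ p.1 * Tz q m p.2.2)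

def Mspan : Submodule ℂ (Um q m) := Submodule.span ℂ (Set.range (Gfam q m c))

lemma Gfam_mem (p : ℕ × ℤ × ℤ) : Gfam q m c p ∈ Mspan q m c :=
  Submodule.subset_span ⟨p, rfl⟩

lemma Kz_mul_Gfam (j : ℤ) (p : ℕ × ℤ × ℤ) :
    Kz q m j * Gfam q m c p = Gfam q m c (p.1, j + p.2.1, p.2.2) := by
  rw [Gfam, Gfam, ← mul_assoc, ← Kz_add]

lemma Tz_mul_Gfam (k : ℤ) (hq0 : q ≠ 0) (p : ℕ × ℤ × ℤ) :
    Tz q m k * Gfam q m c p = Gfam q m c (p.1, p.2.1, k + p.2.2) := by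
  obtain ⟨i, j, k'⟩ := p
  show Tz q m k * (Kz q m j * (OmEta q m c ^ i * Tz q m k'))
    = Kz q m j * (OmEta q m c ^ i * Tz q m (k + k'))
  rw [← mul_assoc, ← (comm_KzTz q m j k).eq, mul_assoc]
  congr 1
  rw [← mul_assoc, ((comm_OmTz q m hq0 c k).pow_left i).symm.eq, mul_assoc, ← Tz_add]

lemma Om_mul_Gfam (hq0 : q ≠ 0) (p : ℕ × ℤ × ℤ) :
    OmEta q m c * Gfam q m c p
      = ((q^2)^p.2.1) • Gfam q m c (p.1+1, p.2.1, p.2.2)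
        + (eta q m * (1-(q^2)^p.2.1) * q^(2*m)) • Gfam q m c (p.1, p.2.1 + m, p.2.2)
        + (eta q m * (1-(q^2)^p.2.1)) • Gfam q m c (p.1, p.2.1 - m, m + p.2.2) := by
  obtain ⟨i, j, k⟩ := p
  show OmEta q m c * (Kz q m j * (OmEta q m c ^ i * Tz q m k)) = _
  rw [← mul_assoc, OmKz q m hq0 c j, Rj]
  simp only [Gfam, add_mul, smul_mul_assoc, smul_add, smul_smul, mul_assoc]
  rw [show OmEta q m c * (OmEta q m c ^ i * Tz q m k) = OmEta q m c ^ (i+1) * Tz q m k from by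
        rw [← mul_assoc, ← pow_succ']]
  rw [show Tz q m (m:ℤ) * (OmEta q m c ^ i * Tz q m k)
      = OmEta q m c ^ i * Tz q m ((m:ℤ) + k) from by
        rw [← mul_assoc, ((comm_OmTz q m hq0 c m).pow_left i).symm.eq, mul_assoc, ← Tz_add]]
  module

lemma lK_Mspan (j : ℤ) : ∀ x ∈ Mspan q m c, Kz q m j * x ∈ Mspan q m c := by
  intro x hx
  induction hx using Submodule.span_induction with
  | mem y hy => obtain ⟨p, rfl⟩ := hy; rw [Kz_mul_Gfam]; exact Gfam_mem q m c _
  | zero => rw [mul_zero]; exact zero_mem _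
  | add y z hy hz ihy ihz => rw [mul_add]; exact add_mem ihy ihz
  | smul r y hy ihy => rw [mul_smul_comm]; exact Submodule.smul_mem _ r ihy

lemma lT_Mspan (k : ℤ) (hq0 : q ≠ 0) : ∀ x ∈ Mspan q m c, Tz q m k * x ∈ Mspan q m c := by
  intro x hx
  induction hx using Submodule.span_induction with
  | mem y hy => obtain ⟨p, rfl⟩ := hy; rw [Tz_mul_Gfam q m c k hq0]; exact Gfam_mem q m c _
  | zero => rw [mul_zero]; exact zero_mem _
  | add y z hy hz ihy ihz => rw [mul_add]; exact add_mem ihy ihz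
  | smul r y hy ihy => rw [mul_smul_comm]; exact Submodule.smul_mem _ r ihy

lemma lOm_Mspan (hq0 : q ≠ 0) : ∀ x ∈ Mspan q m c, OmEta q m c * x ∈ Mspan q m c := by
  intro x hx
  induction hx using Submodule.span_induction with
  | mem y hy =>
      obtain ⟨p, rfl⟩ := hy
      rw [Om_mul_Gfam q m c hq0]
      exact add_mem (add_mem (Submodule.smul_mem _ _ (Gfam_mem q m c _))
        (Submodule.smul_mem _ _ (Gfam_mem q m c _))) (Submodule.smul_mem _ _ (Gfam_mem q m c _))
  | zero => rw [mul_zero]; exact zero_mem _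
  | add y z hy hz ihy ihz => rw [mul_add]; exact add_mem ihy ihz
  | smul r y hy ihy => rw [mul_smul_comm]; exact Submodule.smul_mem _ r ihy

lemma lOmPow_Mspan (hq0 : q ≠ 0) (i : ℕ) :
    ∀ x ∈ Mspan q m c, OmEta q m c ^ i * x ∈ Mspan q m c := by
  induction i with
  | zero => intro x hx; rw [pow_zero, one_mul]; exact hx
  | succ n ih =>
      intro x hx
      rw [pow_succ', mul_assoc]
      exact lOm_Mspan q m c hq0 _ (ih x hx)

lemma mul_Mspan (hq0 : q ≠ 0) :
    ∀ x ∈ Mspan q m c, ∀ y ∈ Mspan q m c, x * y ∈ Mspan q m c := by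
  intro x hx
  induction hx using Submodule.span_induction with
  | mem z hz =>
      obtain ⟨p, rfl⟩ := hz
      intro y hy
      rw [Gfam, mul_assoc, mul_assoc]
      exact lK_Mspan q m c _ _ (lOmPow_Mspan q m c hq0 _ _ (lT_Mspan q m c _ hq0 _ hy))
  | zero => intro y hy; rw [zero_mul]; exact zero_mem _
  | add z w hz hw ihz ihw => intro y hy; rw [add_mul]; exact add_mem (ihz y hy) (ihw y hy)
  | smul r z hz ihz => intro y hy; rw [smul_mul_assoc]; exact Submodule.smul_mem _ r (ihz y hy)

end SpanSec


/-! ### Memberships and the surjectivity side -/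

section MemSec
variable (q : ℂ) (m : ℕ) (c : ℂ)

lemma vK_mem_A : vK q m ∈ Atilde q m :=
  Algebra.subset_adjoin (by left; rfl)
lemma vKi_mem_A : vKi q m ∈ Atilde q m :=
  Algebra.subset_adjoin (by right; rfl)

lemma Kz_mem_A (j : ℤ) : Kz q m j ∈ Atilde q m := by
  cases j with
  | ofNat n =>
      rw [show (Int.ofNat n : ℤ) = (n : ℤ) from rfl, Kz_natCast]
      exact pow_mem (vK_mem_A q m) n
  | negSucc n =>
      rw [Int.negSucc_eq, show (-((n:ℤ)+1)) = -(((n+1:ℕ)):ℤ) by push_cast; ring, Kz_negCast]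
      exact pow_mem (vKi_mem_A q m) (n+1)

lemma comm_KiHi : Commute (vKi q m) (vHi q m) := by
  have h := (((comm_κη q m).inv_left).inv_right).map (Units.coeHom (Um q m))
  simpa [κu, ηu] using h

lemma Om_mem_W : OmEta q m c ∈ Wsub q m c :=
  Algebra.subset_adjoin (by left; rfl)
lemma θ_mem_W : vK q m * vH q m ∈ Wsub q m c :=
  Algebra.subset_adjoin (by right; left; rfl)
lemma θi_mem_W : vHi q m * vKi q m ∈ Wsub q m c := by
  rw [← (comm_KiHi q m).eq]
  exact Algebra.subset_adjoin (by right; right; rfl)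

lemma Tz_mem_W (k : ℤ) : Tz q m k ∈ Wsub q m c := by
  cases k with
  | ofNat n =>
      rw [show (Int.ofNat n : ℤ) = (n : ℤ) from rfl, Tz_natCast]
      exact pow_mem (θ_mem_W q m c) n
  | negSucc n =>
      rw [Int.negSucc_eq, show (-((n:ℤ)+1)) = -(((n+1:ℕ)):ℤ) by push_cast; ring, Tz_negCast]
      exact pow_mem (θi_mem_W q m c) (n+1)

lemma OmPowTz_mem_W (i : ℕ) (k : ℤ) : OmEta q m c ^ i * Tz q m k ∈ Wsub q m c :=
  mul_mem (pow_mem (Om_mem_W q m c) i) (Tz_mem_W q m c k)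

lemma AleB : Atilde q m ≤ Bsub q m := by
  apply Algebra.adjoin_le
  rintro x (rfl | rfl)
  · exact Algebra.subset_adjoin (by right; left; rfl)
  · exact Algebra.subset_adjoin (by right; right; left; rfl)

lemma WleB : Wsub q m c ≤ Bsub q m := by
  apply Algebra.adjoin_le
  have hF : uF q (fm q m) ∈ Bsub q m := Algebra.subset_adjoin (by left; rfl)
  have hK : uK q (fm q m) ∈ Bsub q m := Algebra.subset_adjoin (by right; left; rfl)
  have hKi : uKi q (fm q m) ∈ Bsub q m := Algebra.subset_adjoin (by right; right; left; rfl)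
  have hH : uH q (fm q m) ∈ Bsub q m := Algebra.subset_adjoin (by right; right; right; left; rfl)
  have hHi : uHi q (fm q m) ∈ Bsub q m :=
    Algebra.subset_adjoin (by right; right; right; right; rfl)
  rintro x (rfl | rfl | rfl)
  · rw [OmEta]
    exact add_mem (mul_mem (Subalgebra.algebraMap_mem _ c) hF)
      (Subalgebra.smul_mem _ (add_mem (Subalgebra.smul_mem _ (pow_mem hK m) _)
        (pow_mem hH m)) _)
  · exact mul_mem hK hH
  · exact mul_mem hKi hHi

lemma mulMap_tmul (a : Atilde q m) (w : Wsub q m c) :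
    mulMap q m c (a ⊗ₜ[ℂ] w) = (a : Um q m) * (w : Um q m) := by
  simp [mulMap]

lemma MleRange : Mspan q m c ≤ LinearMap.range (mulMap q m c) := by
  rw [Mspan, Submodule.span_le]
  rintro x ⟨p, rfl⟩
  refine ⟨(⟨Kz q m p.2.1, Kz_mem_A q m _⟩ : Atilde q m) ⊗ₜ[ℂ]
    (⟨OmEta q m c ^ p.1 * Tz q m p.2.2, OmPowTz_mem_W q m c _ _⟩ : Wsub q m c), ?_⟩
  rw [mulMap_tmul]
  rfl

lemma rangeLeB : LinearMap.range (mulMap q m c) ≤ Subalgebra.toSubmodule (Bsub q m) := by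
  rintro x ⟨y, rfl⟩
  simp only [Subalgebra.mem_toSubmodule]
  induction y using TensorProduct.induction_on with
  | zero => rw [(mulMap q m c).map_zero]; exact zero_mem _
  | tmul a w =>
      rw [mulMap_tmul]
      exact mul_mem (AleB q m a.2) (WleB q m c w.2)
  | add u v hu hv => rw [(mulMap q m c).map_add]; exact add_mem hu hv

lemma BleM (hq0 : q ≠ 0) (hc : c ≠ 0) :
    Subalgebra.toSubmodule (Bsub q m) ≤ Mspan q m c := by
  intro x hx
  have hx' : x ∈ Bsub q m := hx
  clear hx
  induction hx' using Algebra.adjoin_induction with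
  | algebraMap r =>
      have h1 : (1 : Um q m) ∈ Mspan q m c := by
        have := Gfam_mem q m c (0, 0, 0)
        simpa [Gfam] using this
      have := Submodule.smul_mem (Mspan q m c) r h1
      rwa [Algebra.algebraMap_eq_smul_one]
  | add y z hy hz ihy ihz => exact add_mem ihy ihz
  | mul y z hy hz ihy ihz => exact mul_Mspan q m c hq0 y ihy z ihz
  | mem y hy =>
      have hOm : OmEta q m c ∈ Mspan q m c := by
        have := Gfam_mem q m c (1, 0, 0)
        simpa [Gfam] using this
      have hKzM : ∀ j : ℤ, Kz q m j ∈ Mspan q m c := by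
        intro j
        have := Gfam_mem q m c (0, j, 0)
        simpa [Gfam] using this
      have hKzTzM : ∀ (j k : ℤ), Kz q m j * Tz q m k ∈ Mspan q m c := by
        intro j k
        have := Gfam_mem q m c (0, j, k)
        simpa [Gfam] using this
      rcases hy with rfl | rfl | rfl | rfl | rfl
      · -- uF
        have h1 : vF q m = c⁻¹ • (OmEta q m c
            - eta q m • ((q^(2*m)) • Kz q m m + Kz q m (-(m:ℤ)) * Tz q m m)) := by
          rw [Om_def2]
          rw [add_sub_cancel_right, smul_smul, inv_mul_cancel₀ hc, one_smul]
        show vF q m ∈ Mspan q m c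
        rw [h1]
        exact Submodule.smul_mem _ _ (sub_mem hOm (Submodule.smul_mem _ _
          (add_mem (Submodule.smul_mem _ _ (hKzM m)) (hKzTzM (-(m:ℤ)) m))))
      · -- uK
        show vK q m ∈ Mspan q m c
        rw [← Kz_one (q := q) (m := m)]
        exact hKzM 1
      · -- uKi
        show vKi q m ∈ Mspan q m c
        rw [show vKi q m = Kz q m (-1) from by
          rw [show (-1:ℤ) = -((1:ℕ):ℤ) by norm_num, Kz_negCast, pow_one]]
        exact hKzM (-1)
      · -- uH
        show vH q m ∈ Mspan q m c
        have h1 : vH q m = Kz q m (-1) * Tz q m 1 := by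
          rw [show (-1:ℤ) = -((1:ℕ):ℤ) by norm_num, Kz_negCast, pow_one, Tz_one,
            ← mul_assoc, um_KiK, one_mul]
        rw [h1]; exact hKzTzM (-1) 1
      · -- uHi
        show vHi q m ∈ Mspan q m c
        have hKHi : Commute (vK q m) (vHi q m) := by
          have h := ((comm_κη q m).inv_right).map (Units.coeHom (Um q m))
          simpa [κu, ηu] using h
        have h1 : vHi q m = Kz q m 1 * Tz q m (-1) := by
          rw [Kz_one, show (-1:ℤ) = -((1:ℕ):ℤ) by norm_num, Tz_negCast, pow_one,
            ← mul_assoc, (hKHi).eq, mul_assoc, um_KKi, mul_one]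
        rw [h1]; exact hKzTzM 1 (-1)

end MemSec


/-! ### Triangularity in the Verma module -/

section TriSec
variable (q : ℂ) (m : ℕ) (c : ℂ) (hq0 : q ≠ 0)

def lvlt (n : ℕ) : Submodule ℂ V := Finsupp.supported ℂ ℂ {p : ℕ × ℤ × ℤ | p.1 < n}

lemma lvlt_apply {n : ℕ} {v : V} (hv : v ∈ lvlt n) {p : ℕ × ℤ × ℤ} (hp : n ≤ p.1) : v p = 0 := by
  rw [lvlt, Finsupp.mem_supported'] at hv
  exact hv p (by simp only [Set.mem_setOf_eq]; omega)

lemma bv_mem_lvlt {n : ℕ} {p : ℕ × ℤ × ℤ} (h : p.1 < n) : bv p ∈ lvlt n :=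
  Finsupp.single_mem_supported ℂ 1 h

lemma lvlt_map (f : Module.End ℂ V) {n n' : ℕ} (h : ∀ p : ℕ × ℤ × ℤ, p.1 < n → f (bv p) ∈ lvlt n') :
    ∀ v ∈ lvlt n, f v ∈ lvlt n' := by
  intro v hv
  rw [lvlt, Finsupp.supported_eq_span_single] at hv
  induction hv using Submodule.span_induction with
  | mem y hy => obtain ⟨p, hp, rfl⟩ := hy; exact h p hp
  | zero => rw [map_zero]; exact zero_mem _
  | add y z hy hz ihy ihz => rw [map_add]; exact add_mem ihy ihz
  | smul r y hy ihy => rw [map_smul]; exact Submodule.smul_mem _ r ihy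

lemma rho_vK_bv (i : ℕ) (a b : ℤ) :
    rho q m hq0 (vK q m) (bv (i,a,b)) = ((q^2)⁻¹)^i • bv (i, a+1, b) := by
  rw [vK, rho_uK]; simp [oK, bv]
lemma rho_vKi_bv (i : ℕ) (a b : ℤ) :
    rho q m hq0 (vKi q m) (bv (i,a,b)) = ((q^2))^i • bv (i, a-1, b) := by
  rw [vKi, rho_uKi]; simp [oKi, bv]
lemma rho_vH_bv (i : ℕ) (a b : ℤ) :
    rho q m hq0 (vH q m) (bv (i,a,b)) = ((q^2))^i • bv (i, a, b+1) := by
  rw [vH, rho_uH]; simp [oH, bv]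
lemma rho_vHi_bv (i : ℕ) (a b : ℤ) :
    rho q m hq0 (vHi q m) (bv (i,a,b)) = ((q^2)⁻¹)^i • bv (i, a, b-1) := by
  rw [vHi, rho_uHi]; simp [oHi, bv]
lemma rho_vF_bv (i : ℕ) (a b : ℤ) :
    rho q m hq0 (vF q m) (bv (i,a,b)) = bv (i+1, a, b) := by
  rw [vF, rho_uF]; simp [oF, bv]

lemma q2ipow_ne {q' : ℂ} (hq0' : q' ≠ 0) (i : ℕ) : ((q':ℂ)^2)^i ≠ 0 :=
  pow_ne_zero i (pow_ne_zero 2 hq0')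

lemma rho_Kz_bv (j : ℤ) (i : ℕ) (a b : ℤ) :
    rho q m hq0 (Kz q m j) (bv (i,a,b)) = ((((q^2)^i)⁻¹)^j) • bv (i, a+j, b) := by
  induction j using Int.induction_on generalizing a with
  | zero => simp
  | succ n ih =>
      rw [Kz_succ, map_mul, Module.End.mul_apply, rho_vK_bv, map_smul, ih,
        smul_smul, inv_pow]
      rw [zpow_add_one₀ (inv_ne_zero (q2ipow_ne hq0 i))]
      rw [show a + 1 + (n:ℤ) = a + ((n:ℤ)+1) by ring]
      congr 1
      ring
  | pred n ih =>
      rw [show (-(n:ℤ)-1) = (-(n:ℤ))-1 from rfl, Kz_pred, map_mul, Module.End.mul_apply,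
        rho_vKi_bv, map_smul, ih, smul_smul]
      rw [zpow_sub_one₀ (inv_ne_zero (q2ipow_ne hq0 i)), inv_inv]
      rw [show a - 1 + -(n:ℤ) = a + (-(n:ℤ)-1) by ring]
      congr 1
      ring

lemma rho_Tz_bv (k : ℤ) (i : ℕ) (a b : ℤ) :
    rho q m hq0 (Tz q m k) (bv (i,a,b)) = bv (i, a+k, b+k) := by
  induction k using Int.induction_on generalizing a b with
  | zero => simp
  | succ n ih =>
      rw [Tz_add, Tz_one, map_mul, Module.End.mul_apply,
        map_mul, Module.End.mul_apply, rho_vH_bv, map_smul, rho_vK_bv, smul_smul, q2i q hq0,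
        one_smul, ih]
      rw [show a + 1 + (n:ℤ) = a + ((n:ℤ)+1) by ring, show b + 1 + (n:ℤ) = b + ((n:ℤ)+1) by ring]
  | pred n ih =>
      rw [show (-(n:ℤ)-1) = -(n:ℤ) + (-1) by ring, Tz_add, Tz_neg_one, map_mul,
        Module.End.mul_apply, map_mul, Module.End.mul_apply, rho_vKi_bv,
        map_smul, rho_vHi_bv, smul_smul, q2i q hq0, one_smul, ih]
      rw [show a - 1 + -(n:ℤ) = a + (-(n:ℤ) + -1) by ring,
        show b - 1 + -(n:ℤ) = b + (-(n:ℤ) + -1) by ring]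

lemma rho_Om_bv (i : ℕ) (a b : ℤ) :
    rho q m hq0 (OmEta q m c) (bv (i,a,b))
      = c • bv (i+1, a, b)
        + (eta q m * q^(2*m) * ((((q^2)^i)⁻¹)^((m:ℤ)))) • bv (i, a+m, b)
        + (eta q m * ((((q^2)^i)⁻¹)^(-(m:ℤ)))) • bv (i, a, b+m) := by
  rw [Om_def2, map_add, map_smul, map_smul, LinearMap.add_apply, LinearMap.smul_apply,
    LinearMap.smul_apply, rho_vF_bv, map_add, LinearMap.add_apply, map_smul,
    LinearMap.smul_apply, rho_Kz_bv, map_mul, Module.End.mul_apply, rho_Tz_bv, rho_Kz_bv]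
  rw [show a + (m:ℤ) + -(m:ℤ) = a by ring]
  module

end TriSec


/-! ### Linear independence of the `K^j Ω^i (KH)^k` -/

section LISec
variable (q : ℂ) (m : ℕ) (c : ℂ) (hq0 : q ≠ 0)

lemma rho_Om_lvlt (n : ℕ) : ∀ p : ℕ × ℤ × ℤ, p.1 < n →
    rho q m hq0 (OmEta q m c) (bv p) ∈ lvlt (n+1) := by
  rintro ⟨i,a,b⟩ hi
  rw [rho_Om_bv]
  exact add_mem (add_mem (Submodule.smul_mem _ _ (bv_mem_lvlt (show i+1 < n+1 by
      simp only at hi; omega)))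
    (Submodule.smul_mem _ _ (bv_mem_lvlt (show i < n+1 by simp only at hi; omega))))
    (Submodule.smul_mem _ _ (bv_mem_lvlt (show i < n+1 by simp only at hi; omega)))

lemma rho_Kz_lvlt (j : ℤ) (n : ℕ) : ∀ p : ℕ × ℤ × ℤ, p.1 < n →
    rho q m hq0 (Kz q m j) (bv p) ∈ lvlt n := by
  rintro ⟨i,a,b⟩ hi
  rw [rho_Kz_bv]
  exact Submodule.smul_mem _ _ (bv_mem_lvlt (show i < n from hi))

lemma tri (i : ℕ) (k : ℤ) : ∃ e ∈ lvlt i,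
    rho q m hq0 (OmEta q m c ^ i * Tz q m k) (bv (0,0,0)) = c^i • bv (i,k,k) + e := by
  induction i with
  | zero =>
      refine ⟨0, zero_mem _, ?_⟩
      rw [pow_zero, one_mul, rho_Tz_bv]
      simp
  | succ n ih =>
      obtain ⟨e, he, heq⟩ := ih
      refine ⟨c^n • ((eta q m * q^(2*m) * ((((q^2)^n)⁻¹)^((m:ℤ)))) • bv (n, k+m, k)
          + (eta q m * ((((q^2)^n)⁻¹)^(-(m:ℤ)))) • bv (n, k, k+m))
        + rho q m hq0 (OmEta q m c) e, ?_, ?_⟩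
      · refine add_mem (Submodule.smul_mem _ _ (add_mem
          (Submodule.smul_mem _ _ (bv_mem_lvlt (show n < n+1 by omega)))
          (Submodule.smul_mem _ _ (bv_mem_lvlt (show n < n+1 by omega))))) ?_
        exact lvlt_map _ (rho_Om_lvlt q m c hq0 n) e he
      · rw [pow_succ', mul_assoc, map_mul, Module.End.mul_apply, heq, map_add, map_smul,
          rho_Om_bv]
        module

lemma evG_tri (p : ℕ × ℤ × ℤ) : ∃ e ∈ lvlt p.1,
    rho q m hq0 (Gfam q m c p) (bv (0,0,0))
      = (c^p.1 * ((((q^2)^p.1)⁻¹)^p.2.1)) • bv (p.1, p.2.1+p.2.2, p.2.2) + e := by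
  obtain ⟨i, j, k⟩ := p
  obtain ⟨e, he, heq⟩ := tri q m c hq0 i k
  refine ⟨rho q m hq0 (Kz q m j) e, lvlt_map _ (rho_Kz_lvlt q m hq0 j i) e he, ?_⟩
  rw [Gfam, map_mul, Module.End.mul_apply, heq, map_add, map_smul, rho_Kz_bv, smul_smul]
  rw [show ((i:ℕ), k + j, k) = ((i:ℕ), j + k, k) from by rw [add_comm k j]]

lemma V_LI (hc : c ≠ 0) :
    LinearIndependent ℂ (fun p => rho q m hq0 (Gfam q m c p) (bv (0,0,0))) := by
  rw [linearIndependent_iff']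
  intro s
  induction s using Finset.strongInduction with
  | _ s ihs =>
    intro g hg p hp
    have hne : s.Nonempty := ⟨p, hp⟩
    obtain ⟨p₀, hp₀s, hsup⟩ := Finset.exists_mem_eq_sup s hne (fun r => r.1)
    set x : ℕ × ℤ × ℤ := (p₀.1, p₀.2.1 + p₀.2.2, p₀.2.2) with hx
    have hval : ∀ r ∈ s, r ≠ p₀ →
        (rho q m hq0 (Gfam q m c r) (bv (0,0,0))) x = 0 := by
      intro r hrs hrne
      obtain ⟨e, he, heq⟩ := evG_tri q m c hq0 r
      rw [heq, Finsupp.add_apply, Finsupp.smul_apply]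
      have he0 : e x = 0 := by
        refine lvlt_apply he ?_
        show r.1 ≤ p₀.1
        rw [← hsup]; exact Finset.le_sup hrs
      have hb0 : (bv (r.1, r.2.1 + r.2.2, r.2.2)) x = 0 := by
        rw [bv, Finsupp.single_apply, if_neg]
        intro hcon
        apply hrne
        rw [hx, Prod.ext_iff] at hcon
        obtain ⟨h1, h2⟩ := hcon
        rw [Prod.ext_iff] at h2
        obtain ⟨h2a, h2b⟩ := h2
        simp only at h1 h2a h2b
        have h4 : r.2.1 = p₀.2.1 := by omega
        exact Prod.ext h1 (Prod.ext h4 h2b)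
      rw [he0, hb0, smul_zero, add_zero]
    have hval0 : (rho q m hq0 (Gfam q m c p₀) (bv (0,0,0))) x
        = c^p₀.1 * ((((q^2)^p₀.1)⁻¹)^p₀.2.1) := by
      obtain ⟨e, he, heq⟩ := evG_tri q m c hq0 p₀
      rw [heq, Finsupp.add_apply, Finsupp.smul_apply]
      have he0 : e x = 0 := by
        refine lvlt_apply he ?_
        show p₀.1 ≤ p₀.1
        omega
      rw [he0, add_zero, bv, Finsupp.single_apply, if_pos rfl, smul_eq_mul, mul_one]
    have hscal : c^p₀.1 * ((((q^2)^p₀.1)⁻¹)^p₀.2.1) ≠ 0 :=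
      mul_ne_zero (pow_ne_zero _ hc)
        (zpow_ne_zero _ (inv_ne_zero (q2ipow_ne hq0 _)))
    have hg0 : g p₀ = 0 := by
      have h1 := congrArg (fun v : V => v x) hg
      simp only [Finsupp.coe_zero, Pi.zero_apply] at h1
      rw [Finsupp.finset_sum_apply] at h1
      rw [Finset.sum_eq_single p₀ (fun r hr hrne => by
        rw [Finsupp.smul_apply, hval r hr hrne, smul_zero])
        (fun h => absurd hp₀s h)] at h1
      rw [Finsupp.smul_apply, hval0, smul_eq_mul] at h1
      exact (mul_eq_zero.mp h1).resolve_right hscal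
    rcases eq_or_ne p p₀ with rfl | hpne
    · exact hg0
    · have herase : ∑ r ∈ s.erase p₀, g r • (rho q m hq0 (Gfam q m c r) (bv (0,0,0))) = 0 := by
        rw [Finset.sum_erase_eq_sub hp₀s, hg, hg0, zero_smul, sub_zero]
      exact ihs (s.erase p₀) (Finset.erase_ssubset hp₀s) g herase p
        (Finset.mem_erase.mpr ⟨hpne, hp⟩)

lemma Gfam_LI (hq0' : q ≠ 0) (hc : c ≠ 0) : LinearIndependent ℂ (Gfam q m c) := by
  have h := V_LI q m c hq0' hc
  exact LinearIndependent.of_comp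
    ((LinearMap.applyₗ (bv (0,0,0))).comp (rho q m hq0').toLinearMap) h

end LISec


/-! ### Bases of `Ã` and `W` -/

section BasisSec
variable (q : ℂ) (m : ℕ) (c : ℂ)

def famA : ℤ → Atilde q m := fun j => ⟨Kz q m j, Kz_mem_A q m j⟩
def famW : ℕ × ℤ → Wsub q m c := fun ik =>
  ⟨OmEta q m c ^ ik.1 * Tz q m ik.2, OmPowTz_mem_W q m c ik.1 ik.2⟩

lemma famA_LI (hq0 : q ≠ 0) (hc : c ≠ 0) : LinearIndependent ℂ (famA q m) := by
  have h1 : LinearIndependent ℂ ((Gfam q m c) ∘ (fun j : ℤ => ((0:ℕ), j, (0:ℤ)))) :=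
    (Gfam_LI q m c hq0 hc).comp _ (fun a b hab => by
      simpa using congrArg (fun p : ℕ × ℤ × ℤ => p.2.1) hab)
  have h2 : ((Gfam q m c) ∘ (fun j : ℤ => ((0:ℕ), j, (0:ℤ)))) = fun j : ℤ => Kz q m j := by
    funext j; simp [Gfam]
  rw [h2] at h1
  exact LinearIndependent.of_comp (Atilde q m).val.toLinearMap h1

lemma famW_LI (hq0 : q ≠ 0) (hc : c ≠ 0) : LinearIndependent ℂ (famW q m c) := by
  have h1 : LinearIndependent ℂ ((Gfam q m c) ∘ (fun ik : ℕ × ℤ => (ik.1, (0:ℤ), ik.2))) :=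
    (Gfam_LI q m c hq0 hc).comp _ (fun a b hab => by
      obtain ⟨h1, _, h3⟩ := Prod.ext_iff.mp hab |>.imp id (Prod.ext_iff.mp ∘ id) |>.imp id id
      exact Prod.ext h1 (by
        have := congrArg (fun p : ℕ × ℤ × ℤ => p.2.2) hab
        simpa using this))
  have h2 : ((Gfam q m c) ∘ (fun ik : ℕ × ℤ => (ik.1, (0:ℤ), ik.2)))
      = fun ik : ℕ × ℤ => OmEta q m c ^ ik.1 * Tz q m ik.2 := by
    funext ik; simp [Gfam]
  rw [h2] at h1
  exact LinearIndependent.of_comp (Wsub q m c).val.toLinearMap h1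

lemma famA_span : ⊤ ≤ Submodule.span ℂ (Set.range (famA q m)) := by
  have hmul : ∀ u ∈ Submodule.span ℂ (Set.range (famA q m)),
      ∀ v ∈ Submodule.span ℂ (Set.range (famA q m)),
        u * v ∈ Submodule.span ℂ (Set.range (famA q m)) := by
    intro u hu
    induction hu using Submodule.span_induction with
    | mem y hy =>
        obtain ⟨j, rfl⟩ := hy
        intro v hv
        induction hv using Submodule.span_induction with
        | mem z hz =>
            obtain ⟨j', rfl⟩ := hz
            refine Submodule.subset_span ⟨j + j', ?_⟩
            apply Subtype.ext
            show Kz q m (j+j') = Kz q m j * Kz q m j'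
            rw [Kz_add]
        | zero => rw [mul_zero]; exact zero_mem _
        | add z w hz hw ihz ihw => rw [mul_add]; exact add_mem ihz ihw
        | smul r z hz ihz => rw [Algebra.mul_smul_comm]; exact Submodule.smul_mem _ r ihz
    | zero => intro v hv; rw [zero_mul]; exact zero_mem _
    | add y z hy hz ihy ihz => intro v hv; rw [add_mul]; exact add_mem (ihy v hv) (ihz v hv)
    | smul r y hy ihy => intro v hv; rw [Algebra.smul_mul_assoc]; exact Submodule.smul_mem _ r (ihy v hv)
  have key : ∀ y (hy : y ∈ Atilde q m),
      (⟨y, hy⟩ : Atilde q m) ∈ Submodule.span ℂ (Set.range (famA q m)) := by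
    intro y hy
    induction hy using Algebra.adjoin_induction with
    | mem z hz =>
        rcases hz with rfl | rfl
        · refine Submodule.subset_span ⟨1, ?_⟩
          apply Subtype.ext
          show Kz q m 1 = _
          rw [Kz_one]; rfl
        · refine Submodule.subset_span ⟨-1, ?_⟩
          apply Subtype.ext
          show Kz q m (-1) = _
          rw [Kz_neg_one]; rfl
    | algebraMap r =>
        have h0 : ((⟨algebraMap ℂ (Um q m) r, Subalgebra.algebraMap_mem _ r⟩ : Atilde q m))
            = r • famA q m 0 := by
          apply Subtype.ext
          show algebraMap ℂ (Um q m) r = r • Kz q m 0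
          rw [Kz_zero, Algebra.algebraMap_eq_smul_one]
        rw [h0]
        exact Submodule.smul_mem _ r (Submodule.subset_span ⟨0, rfl⟩)
    | add y z hy hz ihy ihz =>
        have : (⟨y + z, add_mem hy hz⟩ : Atilde q m) = ⟨y, hy⟩ + ⟨z, hz⟩ := rfl
        rw [this]; exact add_mem ihy ihz
    | mul y z hy hz ihy ihz =>
        have : (⟨y * z, mul_mem hy hz⟩ : Atilde q m) = (⟨y, hy⟩ : Atilde q m) * ⟨z, hz⟩ := rfl
        rw [this]; exact hmul _ ihy _ ihz
  intro u _
  have := key u.1 u.2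
  simpa using this

lemma famW_span (hq0 : q ≠ 0) : ⊤ ≤ Submodule.span ℂ (Set.range (famW q m c)) := by
  have hval : ∀ (i i' : ℕ) (k k' : ℤ),
      (OmEta q m c ^ i * Tz q m k) * (OmEta q m c ^ i' * Tz q m k')
        = OmEta q m c ^ (i+i') * Tz q m (k+k') := by
    intro i i' k k'
    rw [mul_assoc, ← mul_assoc (Tz q m k), ((comm_OmTz q m hq0 c k).pow_left i').symm.eq,
      mul_assoc, ← Tz_add, ← mul_assoc, ← pow_add]
  have hmul : ∀ u ∈ Submodule.span ℂ (Set.range (famW q m c)),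
      ∀ v ∈ Submodule.span ℂ (Set.range (famW q m c)),
        u * v ∈ Submodule.span ℂ (Set.range (famW q m c)) := by
    intro u hu
    induction hu using Submodule.span_induction with
    | mem y hy =>
        obtain ⟨⟨i, k⟩, rfl⟩ := hy
        intro v hv
        induction hv using Submodule.span_induction with
        | mem z hz =>
            obtain ⟨⟨i', k'⟩, rfl⟩ := hz
            refine Submodule.subset_span ⟨(i + i', k + k'), ?_⟩
            apply Subtype.ext
            exact (hval i i' k k').symm
        | zero => rw [mul_zero]; exact zero_mem _
        | add z w hz hw ihz ihw => rw [mul_add]; exact add_mem ihz ihw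
        | smul r z hz ihz => rw [Algebra.mul_smul_comm]; exact Submodule.smul_mem _ r ihz
    | zero => intro v hv; rw [zero_mul]; exact zero_mem _
    | add y z hy hz ihy ihz => intro v hv; rw [add_mul]; exact add_mem (ihy v hv) (ihz v hv)
    | smul r y hy ihy => intro v hv; rw [Algebra.smul_mul_assoc]; exact Submodule.smul_mem _ r (ihy v hv)
  have key : ∀ y (hy : y ∈ Wsub q m c),
      (⟨y, hy⟩ : Wsub q m c) ∈ Submodule.span ℂ (Set.range (famW q m c)) := by
    intro y hy
    induction hy using Algebra.adjoin_induction with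
    | mem z hz =>
        rcases hz with rfl | rfl | rfl
        · refine Submodule.subset_span ⟨(1, 0), ?_⟩
          apply Subtype.ext
          show OmEta q m c ^ 1 * Tz q m 0 = _
          rw [pow_one, Tz_zero, mul_one]
        · refine Submodule.subset_span ⟨(0, 1), ?_⟩
          apply Subtype.ext
          show OmEta q m c ^ 0 * Tz q m 1 = _
          rw [pow_zero, one_mul, Tz_one]; rfl
        · refine Submodule.subset_span ⟨(0, -1), ?_⟩
          apply Subtype.ext
          show OmEta q m c ^ 0 * Tz q m (-1) = _
          rw [pow_zero, one_mul, Tz_neg_one, ← (comm_KiHi q m).eq]; rfl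
    | algebraMap r =>
        have h0 : ((⟨algebraMap ℂ (Um q m) r, Subalgebra.algebraMap_mem _ r⟩ : Wsub q m c))
            = r • famW q m c (0, 0) := by
          apply Subtype.ext
          show algebraMap ℂ (Um q m) r = r • (OmEta q m c ^ 0 * Tz q m 0)
          rw [pow_zero, Tz_zero, one_mul, Algebra.algebraMap_eq_smul_one]
        rw [h0]
        exact Submodule.smul_mem _ r (Submodule.subset_span ⟨(0, 0), rfl⟩)
    | add y z hy hz ihy ihz =>
        have : (⟨y + z, add_mem hy hz⟩ : Wsub q m c) = ⟨y, hy⟩ + ⟨z, hz⟩ := rfl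
        rw [this]; exact add_mem ihy ihz
    | mul y z hy hz ihy ihz =>
        have : (⟨y * z, mul_mem hy hz⟩ : Wsub q m c) = (⟨y, hy⟩ : Wsub q m c) * ⟨z, hz⟩ := rfl
        rw [this]; exact hmul _ ihy _ ihz
  intro u _
  have := key u.1 u.2
  simpa using this

noncomputable def basisA (hq0 : q ≠ 0) (hc : c ≠ 0) : Module.Basis ℤ ℂ (Atilde q m) :=
  Module.Basis.mk (famA_LI q m c hq0 hc) (famA_span q m)

noncomputable def basisW (hq0 : q ≠ 0) (hc : c ≠ 0) : Module.Basis (ℕ × ℤ) ℂ (Wsub q m c) :=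
  Module.Basis.mk (famW_LI q m c hq0 hc) (famW_span q m c hq0)

end BasisSec

end
end St15

set_option maxHeartbeats 1000000
set_option synthInstance.maxHeartbeats 1000000

/-- The multiplication map `Ã ⊗_ℂ W → B`, `a ⊗ w ↦ aw`, is a ℂ-linear
bijection of `Ã ⊗_ℂ W` onto `B`. -/
theorem stmt15 (q : ℂ) (hq0 : q ≠ 0) (hq : ∀ n : ℕ, 0 < n → q ^ n ≠ 1)
    (m : ℕ) (hm : 1 ≤ m) (c : ℂ) (hc : c ≠ 0) :
    Function.Injective (mulMap q m c) ∧
    LinearMap.range (mulMap q m c) = Subalgebra.toSubmodule (Bsub q m) := by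
  classical
  constructor
  · -- injectivity
    have hGLI := St15.Gfam_LI q m c hq0 hc
    set bA := St15.basisA q m c hq0 hc with hbA
    set bW := St15.basisW q m c hq0 hc with hbW
    set bT := Module.Basis.tensorProduct bA bW with hbT
    have hbt : ∀ z : ℤ × (ℕ × ℤ), mulMap q m c (bT z)
        = St15.Gfam q m c (z.2.1, z.1, z.2.2) := by
      rintro ⟨j, i, k⟩
      rw [hbT, Module.Basis.tensorProduct_apply, St15.mulMap_tmul]
      rw [hbA, St15.basisA, Module.Basis.mk_apply, hbW, St15.basisW, Module.Basis.mk_apply]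
      rfl
    have hLI2 : LinearIndependent ℂ (fun z : ℤ × (ℕ × ℤ) => mulMap q m c (bT z)) := by
      rw [funext hbt]
      refine (hGLI).comp (fun z : ℤ × (ℕ × ℤ) => (z.2.1, z.1, z.2.2)) ?_
      intro a b hab
      have h1 : a.2.1 = b.2.1 := congrArg (fun p : ℕ × ℤ × ℤ => p.1) hab
      have h2 : a.1 = b.1 := congrArg (fun p : ℕ × ℤ × ℤ => p.2.1) hab
      have h3 : a.2.2 = b.2.2 := congrArg (fun p : ℕ × ℤ × ℤ => p.2.2) hab
      exact Prod.ext h2 (Prod.ext h1 h3)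
    intro u v huv
    have key : ∀ u, mulMap q m c u
        = Finsupp.linearCombination ℂ (fun z => mulMap q m c (bT z)) (bT.repr u) := by
      intro u
      rw [show (fun z => mulMap q m c (bT z)) = (⇑(mulMap q m c) ∘ ⇑bT) from rfl,
        ← Finsupp.apply_linearCombination, bT.linearCombination_repr]
    have hr : bT.repr u = bT.repr v := hLI2 (by rw [← key, ← key]; exact huv)
    exact bT.repr.injective hr
  · exact le_antisymm (St15.rangeLeB q m c)
      (le_trans (St15.BleM q m c hq0 hc) (St15.MleRange q m c))
end

section
/- Let V be a Whittaker module of type c with cyclic Whittaker vector w. Then the annihilator of w in U equals U·Z_V + U(E − c), the sum of the left ideal of U generated by Z_V and the left ideal of U generated by E − c. -/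
/-- The left ideal `U(E - c)` of `U` generated by `E - c`. -/
noncomputable def Lc (q : ℂ) (m : ℕ) (c : ℂ) : Submodule (Um q m) (Um q m) :=
  Submodule.span (Um q m) {uE q (fm q m) - algebraMap ℂ (Um q m) c}

/-- A Whittaker vector of type `c`: a nonzero vector `v` with `E • v = c • v`. -/
def IsWhittakerVector (q : ℂ) (m : ℕ) (c : ℂ) {V : Type*} [AddCommGroup V]
    [Module (Um q m) V] (v : V) : Prop :=
  v ≠ 0 ∧ uE q (fm q m) • v = algebraMap ℂ (Um q m) c • v

/-- A Whittaker module of type `c`: a `U`-module generated by a Whittaker vector. -/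
def IsWhittakerModule (q : ℂ) (m : ℕ) (c : ℂ) (V : Type*) [AddCommGroup V]
    [Module (Um q m) V] : Prop :=
  ∃ v : V, IsWhittakerVector q m c v ∧ ∀ x : V, ∃ u : Um q m, u • v = x

/-- The set `Z_V = Ann_U(V) ∩ Z(U)`. -/
def ZVset (q : ℂ) (m : ℕ) (V : Type*) [AddCommGroup V] [Module (Um q m) V] :
    Set (Um q m) :=
  {z | z ∈ Subalgebra.center ℂ (Um q m) ∧ ∀ v : V, z • v = 0}

namespace S16

section generic
variable {A : Type*} [Ring A] [Algebra ℂ A]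

lemma smul_flip {μ : ℂ} (hμ : μ ≠ 0) {a b : A} (h : a = μ • b) : b = μ⁻¹ • a := by
  rw [h, smul_smul, inv_mul_cancel₀ hμ, one_smul]

lemma conj_comm {x xi y : A} (hxxi : x * xi = 1) (hxix : xi * x = 1) {μ : ℂ}
    (h : x * y = μ • (y * x)) : y * xi = μ • (xi * y) := by
  calc y * xi = xi * (x * y * xi) := by
        rw [← mul_assoc, ← mul_assoc, hxix, one_mul]
    _ = xi * (μ • (y * x) * xi) := by rw [h]
    _ = μ • (xi * (y * (x * xi))) := by rw [smul_mul_assoc, mul_smul_comm, mul_assoc]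
    _ = μ • (xi * y) := by rw [hxxi, mul_one]

lemma pow_comm_smul {x y : A} {μ : ℂ} (h : x * y = μ • (y * x)) :
    ∀ n : ℕ, x ^ n * y = μ ^ n • (y * x ^ n)
  | 0 => by simp
  | n + 1 => by
    have ih := pow_comm_smul h n
    calc x ^ (n + 1) * y = x ^ n * (x * y) := by rw [pow_succ, mul_assoc]
      _ = μ • (x ^ n * y * x) := by rw [h, mul_smul_comm, ← mul_assoc]
      _ = μ • ((μ ^ n) • (y * x ^ n) * x) := by rw [ih]
      _ = (μ ^ n * μ) • (y * (x ^ n * x)) := by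
            rw [smul_mul_assoc, smul_smul, mul_comm μ, mul_assoc]
      _ = μ ^ (n + 1) • (y * x ^ (n + 1)) := by rw [← pow_succ, ← pow_succ]

lemma zpow_comm_smul (u : Aˣ) {y : A} {μ : ℂ} (hμ : μ ≠ 0)
    (h : (u : A) * y = μ • (y * (u : A))) :
    ∀ s : ℤ, ((u ^ s : Aˣ) : A) * y = μ ^ s • (y * ((u ^ s : Aˣ) : A))
  | Int.ofNat n => by
    have := pow_comm_smul h n
    simpa [zpow_natCast, Units.val_pow_eq_pow_val] using this
  | Int.negSucc n => by
    have hinv : ((u⁻¹ : Aˣ) : A) * y = μ⁻¹ • (y * ((u⁻¹ : Aˣ) : A)) := by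
      have h1 : y * ((u⁻¹ : Aˣ) : A) = μ • (((u⁻¹ : Aˣ) : A) * y) :=
        conj_comm u.mul_inv u.inv_mul h
      exact smul_flip hμ h1
    have := pow_comm_smul hinv (n + 1)
    have h2 : ((u ^ Int.negSucc n : Aˣ) : A) = ((u⁻¹ : Aˣ) : A) ^ (n + 1) := by
      rw [zpow_negSucc, ← inv_pow, Units.val_pow_eq_pow_val]
    have h3 : μ ^ Int.negSucc n = (μ⁻¹) ^ (n + 1) := by
      rw [zpow_negSucc, inv_pow]
    rw [h2, h3]
    exact this

end generic

variable (q : ℂ) (m : ℕ)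

noncomputable def eE : Um q m := uE q (fm q m)
noncomputable def eF : Um q m := uF q (fm q m)
noncomputable def eK : Um q m := uK q (fm q m)
noncomputable def eKi : Um q m := uKi q (fm q m)
noncomputable def eH : Um q m := uH q (fm q m)
noncomputable def eHi : Um q m := uHi q (fm q m)

lemma rKKi : eK q m * eKi q m = 1 := by
  have h := RingQuot.mkAlgHom_rel ℂ (URel.KKi (q := q) (r := fm q m))
  simpa [eK, eKi, uK, uKi] using h

lemma rKiK : eKi q m * eK q m = 1 := by
  have h := RingQuot.mkAlgHom_rel ℂ (URel.KiK (q := q) (r := fm q m))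
  simpa [eK, eKi, uK, uKi] using h

lemma rHHi : eH q m * eHi q m = 1 := by
  have h := RingQuot.mkAlgHom_rel ℂ (URel.HHi (q := q) (r := fm q m))
  simpa [eH, eHi, uH, uHi] using h

lemma rHiH : eHi q m * eH q m = 1 := by
  have h := RingQuot.mkAlgHom_rel ℂ (URel.HiH (q := q) (r := fm q m))
  simpa [eH, eHi, uH, uHi] using h

lemma rKH : eK q m * eH q m = eH q m * eK q m := by
  have h := RingQuot.mkAlgHom_rel ℂ (URel.KH (q := q) (r := fm q m))
  simpa [eK, eH, uK, uH] using h

lemma rKE : eK q m * eE q m = q ^ 2 • (eE q m * eK q m) := by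
  have h := RingQuot.mkAlgHom_rel ℂ (URel.KE (q := q) (r := fm q m))
  simpa [eK, eE, uK, uE] using h

lemma rKF : eK q m * eF q m = (q ^ 2)⁻¹ • (eF q m * eK q m) := by
  have h := RingQuot.mkAlgHom_rel ℂ (URel.KF (q := q) (r := fm q m))
  simpa [eK, eF, uK, uF] using h

lemma rHE : eH q m * eE q m = (q ^ 2)⁻¹ • (eE q m * eH q m) := by
  have h := RingQuot.mkAlgHom_rel ℂ (URel.HE (q := q) (r := fm q m))
  simpa [eH, eE, uH, uE] using h

lemma rHF : eH q m * eF q m = q ^ 2 • (eF q m * eH q m) := by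
  have h := RingQuot.mkAlgHom_rel ℂ (URel.HF (q := q) (r := fm q m))
  simpa [eH, eF, uH, uF] using h

lemma rEF : eE q m * eF q m - eF q m * eE q m
    = (q - q⁻¹)⁻¹ • (eK q m ^ m - eH q m ^ m) := by
  have h := RingQuot.mkAlgHom_rel ℂ (URel.EF (q := q) (r := fm q m))
  simp only [eE, eF, eK, eH, uE, uF, uK, uH]
  set φ := RingQuot.mkAlgHom ℂ (URel q (fm q m))
  have hf : φ (fm q m) = (q - q⁻¹)⁻¹ • (φ gK ^ m - φ gH ^ m) := by
    rw [← map_pow, ← map_pow, ← map_sub, ← map_smul]; rfl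
  rw [map_sub, map_mul, map_mul, hf] at h
  exact h

end S16
namespace S16
variable (q : ℂ) (m : ℕ)

noncomputable def κ : (Um q m)ˣ := ⟨eK q m, eKi q m, rKKi q m, rKiK q m⟩
noncomputable def η : (Um q m)ˣ := ⟨eH q m, eHi q m, rHHi q m, rHiH q m⟩

lemma commKH : Commute (κ q m) (η q m) :=
  Units.ext (by simpa [κ, η] using rKH q m)

noncomputable def τ : (Um q m)ˣ := κ q m * η q m

lemma tau_val : ((τ q m : (Um q m)ˣ) : Um q m) = eK q m * eH q m := rfl

section rels
variable {q} (hq0 : q ≠ 0)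
include hq0

lemma hq2ne : (q : ℂ) ^ 2 ≠ 0 := pow_ne_zero _ hq0

lemma rEKi : eKi q m * eE q m = (q ^ 2)⁻¹ • (eE q m * eKi q m) :=
  smul_flip (hq2ne hq0) (conj_comm (rKKi q m) (rKiK q m) (rKE q m))

lemma rFKi : eKi q m * eF q m = q ^ 2 • (eF q m * eKi q m) := by
  have h := smul_flip (inv_ne_zero (hq2ne hq0))
    (conj_comm (rKKi q m) (rKiK q m) (rKF q m))
  rwa [inv_inv] at h

lemma rEHi : eHi q m * eE q m = q ^ 2 • (eE q m * eHi q m) := by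
  have h := smul_flip (inv_ne_zero (hq2ne hq0))
    (conj_comm (rHHi q m) (rHiH q m) (rHE q m))
  rwa [inv_inv] at h

lemma rFHi : eHi q m * eF q m = (q ^ 2)⁻¹ • (eF q m * eHi q m) :=
  smul_flip (hq2ne hq0) (conj_comm (rHHi q m) (rHiH q m) (rHF q m))

end rels

lemma cKiH : eKi q m * eH q m = eH q m * eKi q m := by
  have h : eK q m * eH q m = (1 : ℂ) • (eH q m * eK q m) := by
    rw [one_smul]; exact rKH q m
  have := conj_comm (rKKi q m) (rKiK q m) h
  rw [one_smul] at this
  exact this.symm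

lemma cKHi : eHi q m * eK q m = eK q m * eHi q m := by
  have h : eH q m * eK q m = (1 : ℂ) • (eK q m * eH q m) := by
    rw [one_smul]; exact (rKH q m).symm
  have := conj_comm (rHHi q m) (rHiH q m) h
  rw [one_smul] at this
  exact this.symm

/-- If `x` commutes with all six generators, it is central. -/
lemma mem_center_of_gens {x : Um q m}
    (hE : x * eE q m = eE q m * x) (hF : x * eF q m = eF q m * x)
    (hK : x * eK q m = eK q m * x) (hKi : x * eKi q m = eKi q m * x)
    (hH : x * eH q m = eH q m * x) (hHi : x * eHi q m = eHi q m * x) :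
    x ∈ Subalgebra.center ℂ (Um q m) := by
  rw [Subalgebra.mem_center_iff]
  intro y
  obtain ⟨f, rfl⟩ := RingQuot.mkAlgHom_surjective ℂ (URel q (fm q m)) y
  induction f using FreeAlgebra.induction with
  | grade0 r =>
      rw [AlgHom.commutes]
      exact Algebra.commutes r x
  | grade1 g =>
      cases g
      · exact hE.symm
      · exact hF.symm
      · exact hK.symm
      · exact hKi.symm
      · exact hH.symm
      · exact hHi.symm
  | mul a b ha hb =>
      rw [map_mul, mul_assoc, hb, ← mul_assoc, ha, mul_assoc]
  | add a b ha hb =>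
      rw [map_add, add_mul, mul_add, ha, hb]

lemma tau_central {q : ℂ} (hq0 : q ≠ 0) :
    ((τ q m : (Um q m)ˣ) : Um q m) ∈ Subalgebra.center ℂ (Um q m) := by
  rw [tau_val]
  have hq2 := hq2ne (q := q) hq0
  apply mem_center_of_gens
  · -- with E
    calc eK q m * eH q m * eE q m
        = eK q m * ((q ^ 2)⁻¹ • (eE q m * eH q m)) := by rw [mul_assoc, rHE]
      _ = (q ^ 2)⁻¹ • (eK q m * eE q m * eH q m) := by
            rw [mul_smul_comm, ← mul_assoc]
      _ = (q ^ 2)⁻¹ • (q ^ 2 • (eE q m * eK q m) * eH q m) := by rw [rKE]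
      _ = ((q ^ 2)⁻¹ * q ^ 2) • (eE q m * (eK q m * eH q m)) := by
            rw [smul_mul_assoc, smul_smul, mul_assoc]
      _ = eE q m * (eK q m * eH q m) := by rw [inv_mul_cancel₀ hq2, one_smul]
  · calc eK q m * eH q m * eF q m
        = eK q m * (q ^ 2 • (eF q m * eH q m)) := by rw [mul_assoc, rHF]
      _ = q ^ 2 • (eK q m * eF q m * eH q m) := by rw [mul_smul_comm, ← mul_assoc]
      _ = q ^ 2 • ((q ^ 2)⁻¹ • (eF q m * eK q m) * eH q m) := by rw [rKF]
      _ = (q ^ 2 * (q ^ 2)⁻¹) • (eF q m * (eK q m * eH q m)) := by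
            rw [smul_mul_assoc, smul_smul, mul_assoc]
      _ = eF q m * (eK q m * eH q m) := by rw [mul_inv_cancel₀ hq2, one_smul]
  · rw [mul_assoc, ← rKH, ← mul_assoc]
  · calc eK q m * eH q m * eKi q m
        = eK q m * (eKi q m * eH q m) := by rw [mul_assoc, cKiH]
      _ = eH q m := by rw [← mul_assoc, rKKi, one_mul]
      _ = eKi q m * (eK q m * eH q m) := by rw [← mul_assoc, rKiK, one_mul]
  · calc eK q m * eH q m * eH q m = eH q m * eK q m * eH q m := by rw [rKH]
      _ = eH q m * (eK q m * eH q m) := by rw [mul_assoc]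
  · calc eK q m * eH q m * eHi q m
        = eK q m := by rw [mul_assoc, rHHi, mul_one]
      _ = eHi q m * (eK q m * eH q m) := by
            rw [← mul_assoc, cKHi, mul_assoc, rHiH, mul_one]

end S16
namespace S16
variable (q : ℂ) (m : ℕ)

/-- coefficients of the Casimir element -/
noncomputable def αc : ℂ := (q - q⁻¹)⁻¹ * ((q ^ 2) ^ m * ((q ^ 2) ^ m - 1)⁻¹)
noncomputable def βc : ℂ := (q - q⁻¹)⁻¹ * ((q ^ 2) ^ m - 1)⁻¹

/-- the Casimir element -/
noncomputable def Cas : Um q m :=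
  eF q m * eE q m + αc q m • (eK q m ^ m) + βc q m • (eH q m ^ m)

section scalars
variable {q m} (hq0 : q ≠ 0) (hq : ∀ n : ℕ, 0 < n → q ^ n ≠ 1) (hm : 1 ≤ m)
include hq0 hq
set_option linter.unusedSectionVars false

lemma hqqne : q - q⁻¹ ≠ 0 := by
  intro h
  have h1 : q = q⁻¹ := sub_eq_zero.mp h
  have h2 : q ^ 2 = 1 := by
    rw [pow_two]
    nth_rewrite 2 [h1]
    exact mul_inv_cancel₀ hq0
  exact hq 2 (by norm_num) h2

include hm in
lemma hQmne : ((q : ℂ) ^ 2) ^ m ≠ 1 := by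
  rw [← pow_mul]
  exact hq (2 * m) (by omega)

include hm in
lemma hQm1ne : (1 : ℂ) - ((q ^ 2) ^ m)⁻¹ ≠ 0 := by
  intro h
  have h1 : (((q : ℂ) ^ 2) ^ m)⁻¹ = 1 := (sub_eq_zero.mp h).symm
  exact hQmne hq0 hq hm (inv_eq_one.mp h1)

include hm in
lemma hQm2ne : ((q : ℂ) ^ 2) ^ m - 1 ≠ 0 := sub_ne_zero.mpr (hQmne hq0 hq hm)

omit hq in
lemma hQm0ne : ((q : ℂ) ^ 2) ^ m ≠ 0 := pow_ne_zero _ (hq2ne hq0)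

include hm in
lemma sid1 : (q - q⁻¹)⁻¹ + αc q m * ((q ^ 2) ^ m)⁻¹ = αc q m := by
  have h2 := hQm2ne hq0 hq hm
  have h3 : ((q : ℂ) ^ 2) ^ m ≠ 0 := pow_ne_zero _ (hq2ne hq0)
  have key : 1 + ((q ^ 2) ^ m - 1)⁻¹ = (q ^ 2) ^ m * ((q ^ 2) ^ m - 1)⁻¹ := by
    field_simp
    ring
  calc (q - q⁻¹)⁻¹ + αc q m * ((q ^ 2) ^ m)⁻¹
      = (q - q⁻¹)⁻¹ * (1 + ((q ^ 2) ^ m * ((q ^ 2) ^ m)⁻¹) * ((q ^ 2) ^ m - 1)⁻¹) := by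
        rw [αc]; ring
    _ = (q - q⁻¹)⁻¹ * (1 + ((q ^ 2) ^ m - 1)⁻¹) := by
        rw [mul_inv_cancel₀ h3, one_mul]
    _ = αc q m := by rw [key, αc]

include hm in
lemma sid2 : βc q m * (q ^ 2) ^ m - (q - q⁻¹)⁻¹ = βc q m := by
  have h2 := hQm2ne hq0 hq hm
  have key : ((q ^ 2) ^ m - 1)⁻¹ * (q ^ 2) ^ m - 1 = ((q ^ 2) ^ m - 1)⁻¹ := by
    field_simp
    ring
  calc βc q m * (q ^ 2) ^ m - (q - q⁻¹)⁻¹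
      = (q - q⁻¹)⁻¹ * (((q ^ 2) ^ m - 1)⁻¹ * (q ^ 2) ^ m - 1) := by
        rw [βc]; ring
    _ = βc q m := by rw [key, βc]

/-- injectivity of `s ↦ (q^2)^s` -/
lemma zpow_injective : Function.Injective (fun s : ℤ => ((q : ℂ) ^ 2) ^ s) := by
  have key : ∀ k : ℤ, ((q : ℂ) ^ 2) ^ k = 1 → k = 0 := by
    intro k hk
    rcases k with n | n
    · rcases Nat.eq_zero_or_pos n with h | h
      · simp [h]
      · exfalso
        apply hq (2 * n) (by omega)
        rw [pow_mul]
        simpa using hk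
    · exfalso
      rw [zpow_negSucc, inv_eq_one] at hk
      apply hq (2 * (n + 1)) (by omega)
      rw [pow_mul]
      exact hk
  intro s t h
  simp only at h
  have h2 : ((q : ℂ) ^ 2) ^ (s - t) = 1 := by
    rw [zpow_sub₀ (hq2ne hq0), h, div_self (zpow_ne_zero _ (hq2ne hq0))]
  have := key _ h2
  omega

end scalars

section pows
variable {q} (hq0 : q ≠ 0)

-- power commutation lemmas
lemma pKmE : eK q m ^ m * eE q m = ((q ^ 2) ^ m) • (eE q m * eK q m ^ m) :=
  pow_comm_smul (rKE q m) m

lemma pHmE : eH q m ^ m * eE q m = (((q ^ 2)⁻¹) ^ m) • (eE q m * eH q m ^ m) :=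
  pow_comm_smul (rHE q m) m

lemma pKmF : eK q m ^ m * eF q m = (((q ^ 2)⁻¹) ^ m) • (eF q m * eK q m ^ m) :=
  pow_comm_smul (rKF q m) m

lemma pHmF : eH q m ^ m * eF q m = ((q ^ 2) ^ m) • (eF q m * eH q m ^ m) :=
  pow_comm_smul (rHF q m) m

include hq0 in
lemma eE_Km : eE q m * eK q m ^ m = (((q ^ 2) ^ m))⁻¹ • (eK q m ^ m * eE q m) :=
  smul_flip (A := Um q m) (hQm0ne hq0) (pKmE m)

include hq0 in
lemma eE_Hm : eE q m * eH q m ^ m = ((q ^ 2) ^ m) • (eH q m ^ m * eE q m) := by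
  have h := smul_flip (A := Um q m) (pow_ne_zero m (inv_ne_zero (hq2ne hq0))) (pHmE m)
  rwa [inv_pow, inv_inv] at h

include hq0 in
lemma eF_Km : eF q m * eK q m ^ m = ((q ^ 2) ^ m) • (eK q m ^ m * eF q m) := by
  have h := smul_flip (A := Um q m) (pow_ne_zero m (inv_ne_zero (hq2ne hq0))) (pKmF m)
  rwa [inv_pow, inv_inv] at h

include hq0 in
lemma eF_Hm : eF q m * eH q m ^ m = (((q ^ 2) ^ m))⁻¹ • (eH q m ^ m * eF q m) :=
  smul_flip (A := Um q m) (hQm0ne hq0) (pHmF m)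

end pows

lemma rEF' : eE q m * eF q m = eF q m * eE q m
    + (q - q⁻¹)⁻¹ • eK q m ^ m - (q - q⁻¹)⁻¹ • eH q m ^ m := by
  have h := rEF q m
  rw [smul_sub, sub_eq_iff_eq_add] at h
  rw [h]
  abel

end S16
namespace S16
variable (q : ℂ) (m : ℕ)

section cas
variable {q m} (hq0 : q ≠ 0) (hq : ∀ n : ℕ, 0 < n → q ^ n ≠ 1) (hm : 1 ≤ m)
include hq0

lemma casE (hq : ∀ n : ℕ, 0 < n → q ^ n ≠ 1) (hm : 1 ≤ m) :
    Cas q m * eE q m = eE q m * Cas q m := by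
  have h1 := eE_Km (m := m) hq0
  have h2 := eE_Hm (m := m) hq0
  rw [Cas, mul_add, mul_add, mul_smul_comm, mul_smul_comm, h1, h2, ← mul_assoc,
      rEF']
  simp only [add_mul, sub_mul, smul_mul_assoc]
  match_scalars
  · rfl
  · linear_combination -sid1 hq0 hq hm
  · linear_combination -sid2 hq0 hq hm

lemma casF (hq : ∀ n : ℕ, 0 < n → q ^ n ≠ 1) (hm : 1 ≤ m) :
    Cas q m * eF q m = eF q m * Cas q m := by
  rw [Cas, add_mul, add_mul, smul_mul_assoc, smul_mul_assoc, pKmF, pHmF,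
      mul_assoc, rEF']
  simp only [mul_add, mul_sub, mul_smul_comm, smul_smul]
  match_scalars
  · rfl
  · rw [inv_pow]
    linear_combination sid1 hq0 hq hm
  · linear_combination sid2 hq0 hq hm
end cas
end S16
namespace S16
variable (q : ℂ) (m : ℕ)

section cas2
variable {q m} (hq0 : q ≠ 0)
include hq0

lemma casK : Cas q m * eK q m = eK q m * Cas q m := by
  have h1 : eK q m * (eF q m * eE q m) = (eF q m * eE q m) * eK q m := by
    calc eK q m * (eF q m * eE q m) = (eK q m * eF q m) * eE q m :=
          (mul_assoc _ _ _).symm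
      _ = (q ^ 2)⁻¹ • (eF q m * eK q m * eE q m) := by rw [rKF, smul_mul_assoc]
      _ = (q ^ 2)⁻¹ • (eF q m * (q ^ 2 • (eE q m * eK q m))) := by
          rw [mul_assoc, rKE]
      _ = ((q ^ 2)⁻¹ * q ^ 2) • (eF q m * eE q m * eK q m) := by
          rw [mul_smul_comm, smul_smul, ← mul_assoc]
      _ = (eF q m * eE q m) * eK q m := by
          rw [inv_mul_cancel₀ (hq2ne hq0), one_smul]
  have h2 : eK q m * eK q m ^ m = eK q m ^ m * eK q m :=
    ((Commute.refl (eK q m)).pow_right m).eq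
  have h3 : eK q m * eH q m ^ m = eH q m ^ m * eK q m :=
    ((show Commute (eK q m) (eH q m) from rKH q m).pow_right m).eq
  rw [Cas, add_mul, add_mul, mul_add, mul_add, mul_smul_comm, mul_smul_comm,
      smul_mul_assoc, smul_mul_assoc, h1, h2, h3]

lemma casKi : Cas q m * eKi q m = eKi q m * Cas q m := by
  have h1 : eKi q m * (eF q m * eE q m) = (eF q m * eE q m) * eKi q m := by
    calc eKi q m * (eF q m * eE q m) = (eKi q m * eF q m) * eE q m :=
          (mul_assoc _ _ _).symm
      _ = q ^ 2 • (eF q m * eKi q m * eE q m) := by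
          rw [rFKi (m := m) hq0, smul_mul_assoc]
      _ = q ^ 2 • (eF q m * ((q ^ 2)⁻¹ • (eE q m * eKi q m))) := by
          rw [mul_assoc, rEKi (m := m) hq0]
      _ = (q ^ 2 * (q ^ 2)⁻¹) • (eF q m * eE q m * eKi q m) := by
          rw [mul_smul_comm, smul_smul, ← mul_assoc]
      _ = (eF q m * eE q m) * eKi q m := by
          rw [mul_inv_cancel₀ (hq2ne hq0), one_smul]
  have h2 : eKi q m * eK q m ^ m = eK q m ^ m * eKi q m :=
    ((show Commute (eKi q m) (eK q m) from
      (rKiK q m).trans (rKKi q m).symm).pow_right m).eq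
  have h3 : eKi q m * eH q m ^ m = eH q m ^ m * eKi q m :=
    ((show Commute (eKi q m) (eH q m) from cKiH q m).pow_right m).eq
  rw [Cas, add_mul, add_mul, mul_add, mul_add, mul_smul_comm, mul_smul_comm,
      smul_mul_assoc, smul_mul_assoc, h1, h2, h3]

lemma casH : Cas q m * eH q m = eH q m * Cas q m := by
  have h1 : eH q m * (eF q m * eE q m) = (eF q m * eE q m) * eH q m := by
    calc eH q m * (eF q m * eE q m) = (eH q m * eF q m) * eE q m :=
          (mul_assoc _ _ _).symm
      _ = q ^ 2 • (eF q m * eH q m * eE q m) := by rw [rHF, smul_mul_assoc]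
      _ = q ^ 2 • (eF q m * ((q ^ 2)⁻¹ • (eE q m * eH q m))) := by
          rw [mul_assoc, rHE]
      _ = (q ^ 2 * (q ^ 2)⁻¹) • (eF q m * eE q m * eH q m) := by
          rw [mul_smul_comm, smul_smul, ← mul_assoc]
      _ = (eF q m * eE q m) * eH q m := by
          rw [mul_inv_cancel₀ (hq2ne hq0), one_smul]
  have h2 : eH q m * eK q m ^ m = eK q m ^ m * eH q m :=
    ((show Commute (eH q m) (eK q m) from (rKH q m).symm).pow_right m).eq
  have h3 : eH q m * eH q m ^ m = eH q m ^ m * eH q m :=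
    ((Commute.refl (eH q m)).pow_right m).eq
  rw [Cas, add_mul, add_mul, mul_add, mul_add, mul_smul_comm, mul_smul_comm,
      smul_mul_assoc, smul_mul_assoc, h1, h2, h3]

lemma casHi : Cas q m * eHi q m = eHi q m * Cas q m := by
  have h1 : eHi q m * (eF q m * eE q m) = (eF q m * eE q m) * eHi q m := by
    calc eHi q m * (eF q m * eE q m) = (eHi q m * eF q m) * eE q m :=
          (mul_assoc _ _ _).symm
      _ = (q ^ 2)⁻¹ • (eF q m * eHi q m * eE q m) := by
          rw [rFHi (m := m) hq0, smul_mul_assoc]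
      _ = (q ^ 2)⁻¹ • (eF q m * (q ^ 2 • (eE q m * eHi q m))) := by
          rw [mul_assoc, rEHi (m := m) hq0]
      _ = ((q ^ 2)⁻¹ * q ^ 2) • (eF q m * eE q m * eHi q m) := by
          rw [mul_smul_comm, smul_smul, ← mul_assoc]
      _ = (eF q m * eE q m) * eHi q m := by
          rw [inv_mul_cancel₀ (hq2ne hq0), one_smul]
  have h2 : eHi q m * eK q m ^ m = eK q m ^ m * eHi q m :=
    ((show Commute (eHi q m) (eK q m) from cKHi q m).pow_right m).eq
  have h3 : eHi q m * eH q m ^ m = eH q m ^ m * eHi q m :=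
    ((show Commute (eHi q m) (eH q m) from
      (rHiH q m).trans (rHHi q m).symm).pow_right m).eq
  rw [Cas, add_mul, add_mul, mul_add, mul_add, mul_smul_comm, mul_smul_comm,
      smul_mul_assoc, smul_mul_assoc, h1, h2, h3]

lemma cas_central (hq : ∀ n : ℕ, 0 < n → q ^ n ≠ 1) (hm : 1 ≤ m) :
    Cas q m ∈ Subalgebra.center ℂ (Um q m) :=
  mem_center_of_gens q m (casE hq0 hq hm) (casF hq0 hq hm) (casK hq0)
    (casKi hq0) (casH hq0) (casHi hq0)

end cas2

lemma inv_central {u : (Um q m)ˣ}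
    (h : ((u : (Um q m)ˣ) : Um q m) ∈ Subalgebra.center ℂ (Um q m)) :
    ((u⁻¹ : (Um q m)ˣ) : Um q m) ∈ Subalgebra.center ℂ (Um q m) := by
  rw [Subalgebra.mem_center_iff] at h ⊢
  intro y
  have h2 : (u : Um q m) * (y * ((u⁻¹ : (Um q m)ˣ) : Um q m))
      = (u : Um q m) * (((u⁻¹ : (Um q m)ˣ) : Um q m) * y) := by
    rw [← mul_assoc, ← h y, mul_assoc, u.mul_inv, mul_one, ← mul_assoc,
      u.mul_inv, one_mul]
  calc y * ((u⁻¹ : (Um q m)ˣ) : Um q m)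
      = ((u⁻¹ : (Um q m)ˣ) : Um q m)
        * ((u : Um q m) * (y * ((u⁻¹ : (Um q m)ˣ) : Um q m))) := by
        rw [← mul_assoc, u.inv_mul, one_mul]
    _ = ((u⁻¹ : (Um q m)ˣ) : Um q m)
        * ((u : Um q m) * (((u⁻¹ : (Um q m)ˣ) : Um q m) * y)) := by rw [h2]
    _ = ((u⁻¹ : (Um q m)ˣ) : Um q m) * y := by
        rw [← mul_assoc, u.inv_mul, one_mul]

section kz
variable {q} (hq0 : q ≠ 0)
include hq0

lemma kz_E (s : ℤ) : ((κ q m ^ s : (Um q m)ˣ) : Um q m) * eE q m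
    = ((q ^ 2) ^ s) • (eE q m * ((κ q m ^ s : (Um q m)ˣ) : Um q m)) :=
  zpow_comm_smul (κ q m) (hq2ne hq0) (rKE q m) s

lemma kz_F (s : ℤ) : ((κ q m ^ s : (Um q m)ˣ) : Um q m) * eF q m
    = (((q ^ 2)⁻¹) ^ s) • (eF q m * ((κ q m ^ s : (Um q m)ˣ) : Um q m)) :=
  zpow_comm_smul (κ q m) (inv_ne_zero (hq2ne hq0)) (rKF q m) s

lemma eE_kz (s : ℤ) : eE q m * ((κ q m ^ s : (Um q m)ˣ) : Um q m)
    = (((q ^ 2) ^ s))⁻¹ • (((κ q m ^ s : (Um q m)ˣ) : Um q m) * eE q m) :=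
  smul_flip (A := Um q m) (zpow_ne_zero s (hq2ne hq0)) (kz_E m hq0 s)

lemma eF_kz (s : ℤ) : eF q m * ((κ q m ^ s : (Um q m)ˣ) : Um q m)
    = ((q ^ 2) ^ s) • (((κ q m ^ s : (Um q m)ˣ) : Um q m) * eF q m) := by
  have h := smul_flip (A := Um q m) (zpow_ne_zero s (inv_ne_zero (hq2ne hq0))) (kz_F m hq0 s)
  rwa [inv_zpow, inv_inv] at h

end kz
end S16
namespace S16
variable (q : ℂ) (m : ℕ) (c : ℂ)

noncomputable def Qs (s : ℤ) : Submodule ℂ (Um q m) :=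
  Submodule.map (LinearMap.mulRight ℂ (((κ q m ^ s : (Um q m)ˣ)) : Um q m))
    (Subalgebra.toSubmodule (Subalgebra.center ℂ (Um q m)))

noncomputable def PP : Submodule ℂ (Um q m) :=
  (⨆ s : ℤ, Qs q m s) ⊔ (Submodule.restrictScalars ℂ (Lc q m c))

lemma mem_Qs {z : Um q m} (hz : z ∈ Subalgebra.center ℂ (Um q m)) (s : ℤ) :
    z * ((κ q m ^ s : (Um q m)ˣ) : Um q m) ∈ Qs q m s :=
  ⟨z, hz, rfl⟩

lemma Qs_le_PP (s : ℤ) : Qs q m s ≤ PP q m c :=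
  le_trans (le_iSup _ s) le_sup_left

lemma Lc_le_PP {x : Um q m} (hx : x ∈ Lc q m c) : x ∈ PP q m c :=
  Submodule.mem_sup_right (show x ∈ Submodule.restrictScalars ℂ (Lc q m c) from hx)

lemma mul_alg (x : Um q m) (a : ℂ) :
    x * algebraMap ℂ (Um q m) a = a • x := by
  rw [← Algebra.commutes, ← Algebra.smul_def]

lemma mul_E_split (x : Um q m) :
    x * eE q m = x * (eE q m - algebraMap ℂ (Um q m) c) + c • x := by
  rw [mul_sub, mul_alg]
  abel

lemma mem_Lc (x : Um q m) :
    x * (eE q m - algebraMap ℂ (Um q m) c) ∈ Lc q m c :=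
  Submodule.mem_span_singleton.mpr ⟨x, rfl⟩

-- unit identities
lemma cKtau : Commute (κ q m) (τ q m) :=
  (Commute.refl (κ q m)).mul_right (commKH q m)

lemma ueta : η q m = τ q m * (κ q m)⁻¹ := by
  rw [τ, (commKH q m).eq, mul_inv_cancel_right]

lemma kval_add (a b : ℤ) : ((κ q m ^ (a + b) : (Um q m)ˣ) : Um q m)
    = ((κ q m ^ a : (Um q m)ˣ) : Um q m) * ((κ q m ^ b : (Um q m)ˣ) : Um q m) := by
  rw [zpow_add]
  rfl

lemma eK_kz (s : ℤ) : eK q m * ((κ q m ^ s : (Um q m)ˣ) : Um q m)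
    = ((κ q m ^ (1 + s) : (Um q m)ˣ) : Um q m) := by
  rw [kval_add, zpow_one]
  rfl

lemma eKi_kz (s : ℤ) : eKi q m * ((κ q m ^ s : (Um q m)ˣ) : Um q m)
    = ((κ q m ^ (-1 + s) : (Um q m)ˣ) : Um q m) := by
  rw [kval_add, zpow_neg_one]
  rfl

lemma eH_kz (s : ℤ) : eH q m * ((κ q m ^ s : (Um q m)ˣ) : Um q m)
    = ((τ q m : (Um q m)ˣ) : Um q m) * ((κ q m ^ (-1 + s) : (Um q m)ˣ) : Um q m) := by
  have h : η q m * κ q m ^ s = τ q m * κ q m ^ (-1 + s) := by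
    rw [ueta, mul_assoc, ← zpow_neg_one, ← zpow_add]
  calc eH q m * ((κ q m ^ s : (Um q m)ˣ) : Um q m)
      = ((η q m * κ q m ^ s : (Um q m)ˣ) : Um q m) := rfl
    _ = ((τ q m * κ q m ^ (-1 + s) : (Um q m)ˣ) : Um q m) := by rw [h]
    _ = ((τ q m : (Um q m)ˣ) : Um q m)
        * ((κ q m ^ (-1 + s) : (Um q m)ˣ) : Um q m) := rfl

lemma eHi_kz (s : ℤ) : eHi q m * ((κ q m ^ s : (Um q m)ˣ) : Um q m)
    = (((τ q m)⁻¹ : (Um q m)ˣ) : Um q m) * ((κ q m ^ (1 + s) : (Um q m)ˣ) : Um q m) := by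
  have h1 : (η q m)⁻¹ = κ q m * (τ q m)⁻¹ := by
    rw [ueta, mul_inv_rev, inv_inv]
  have hx : κ q m ^ ((1 : ℤ) + s) = κ q m * κ q m ^ s := by
    rw [zpow_add, zpow_one]
  have h : (η q m)⁻¹ * κ q m ^ s = (τ q m)⁻¹ * κ q m ^ ((1 : ℤ) + s) := by
    rw [h1, ((cKtau q m).inv_right).eq, mul_assoc, ← hx]
  calc eHi q m * ((κ q m ^ s : (Um q m)ˣ) : Um q m)
      = (((η q m)⁻¹ * κ q m ^ s : (Um q m)ˣ) : Um q m) := rfl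
    _ = (((τ q m)⁻¹ * κ q m ^ ((1:ℤ) + s) : (Um q m)ˣ) : Um q m) := by rw [h]
    _ = (((τ q m)⁻¹ : (Um q m)ˣ) : Um q m)
        * ((κ q m ^ (1 + s) : (Um q m)ˣ) : Um q m) := rfl

lemma Km_val : eK q m ^ m = ((κ q m ^ (m : ℤ) : (Um q m)ˣ) : Um q m) := by
  rw [zpow_natCast]
  rfl

lemma eta_pow : η q m ^ m = τ q m ^ m * (κ q m) ^ (-(m : ℤ)) := by
  rw [ueta, ((cKtau q m).symm.inv_right).mul_pow, inv_pow,
    ← zpow_natCast (κ q m), ← zpow_neg]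

lemma Hm_val : eH q m ^ m
    = ((τ q m ^ m * κ q m ^ (-(m : ℤ)) : (Um q m)ˣ) : Um q m) := by
  rw [← eta_pow]
  rfl

lemma kz_Km (s : ℤ) : ((κ q m ^ s : (Um q m)ˣ) : Um q m) * eK q m ^ m
    = ((κ q m ^ (s + (m : ℤ)) : (Um q m)ˣ) : Um q m) := by
  rw [Km_val, kval_add]

lemma kz_Hm (s : ℤ) : ((κ q m ^ s : (Um q m)ˣ) : Um q m) * eH q m ^ m
    = ((τ q m ^ m : (Um q m)ˣ) : Um q m)
      * ((κ q m ^ (s + -(m : ℤ)) : (Um q m)ˣ) : Um q m) := by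
  have h : κ q m ^ s * (τ q m ^ m * κ q m ^ (-(m : ℤ)))
      = τ q m ^ m * κ q m ^ (s + -(m : ℤ)) := by
    rw [← mul_assoc, (((cKtau q m).pow_right m).zpow_left s).eq, mul_assoc,
      ← zpow_add]
  calc ((κ q m ^ s : (Um q m)ˣ) : Um q m) * eH q m ^ m
      = ((κ q m ^ s * (τ q m ^ m * κ q m ^ (-(m : ℤ))) : (Um q m)ˣ) : Um q m) := by
        rw [Hm_val]; rfl
    _ = ((τ q m ^ m * κ q m ^ (s + -(m : ℤ)) : (Um q m)ˣ) : Um q m) := by rw [h]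
    _ = ((τ q m ^ m : (Um q m)ˣ) : Um q m)
        * ((κ q m ^ (s + -(m : ℤ)) : (Um q m)ˣ) : Um q m) := rfl

end S16
namespace S16
variable (q : ℂ) (m : ℕ) (c : ℂ)

lemma FE_eq : eF q m * eE q m
    = Cas q m - αc q m • eK q m ^ m - βc q m • eH q m ^ m := by
  rw [Cas]
  abel

section gens
variable {q m c} (hq0 : q ≠ 0) (hq : ∀ n : ℕ, 0 < n → q ^ n ≠ 1)
  (hm : 1 ≤ m) (hc : c ≠ 0)

lemma genK_mem (s : ℤ) (z : Um q m) (hz : z ∈ Subalgebra.center ℂ (Um q m)) :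
    eK q m * (z * ((κ q m ^ s : (Um q m)ˣ) : Um q m)) ∈ PP q m c := by
  have hzc := Subalgebra.mem_center_iff.mp hz
  have h : eK q m * (z * ((κ q m ^ s : (Um q m)ˣ) : Um q m))
      = z * ((κ q m ^ (1 + s) : (Um q m)ˣ) : Um q m) := by
    rw [← mul_assoc, hzc (eK q m), mul_assoc, eK_kz]
  rw [h]
  exact Qs_le_PP q m c _ (mem_Qs q m hz _)

lemma genKi_mem (s : ℤ) (z : Um q m) (hz : z ∈ Subalgebra.center ℂ (Um q m)) :
    eKi q m * (z * ((κ q m ^ s : (Um q m)ˣ) : Um q m)) ∈ PP q m c := by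
  have hzc := Subalgebra.mem_center_iff.mp hz
  have h : eKi q m * (z * ((κ q m ^ s : (Um q m)ˣ) : Um q m))
      = z * ((κ q m ^ (-1 + s) : (Um q m)ˣ) : Um q m) := by
    rw [← mul_assoc, hzc (eKi q m), mul_assoc, eKi_kz]
  rw [h]
  exact Qs_le_PP q m c _ (mem_Qs q m hz _)

include hq0 in
lemma genH_mem (s : ℤ) (z : Um q m) (hz : z ∈ Subalgebra.center ℂ (Um q m)) :
    eH q m * (z * ((κ q m ^ s : (Um q m)ˣ) : Um q m)) ∈ PP q m c := by
  have hzc := Subalgebra.mem_center_iff.mp hz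
  have h : eH q m * (z * ((κ q m ^ s : (Um q m)ˣ) : Um q m))
      = (z * ((τ q m : (Um q m)ˣ) : Um q m))
        * ((κ q m ^ (-1 + s) : (Um q m)ˣ) : Um q m) := by
    rw [← mul_assoc, hzc (eH q m), mul_assoc, eH_kz, ← mul_assoc]
  rw [h]
  exact Qs_le_PP q m c _ (mem_Qs q m (mul_mem hz (tau_central m hq0)) _)

include hq0 in
lemma genHi_mem (s : ℤ) (z : Um q m) (hz : z ∈ Subalgebra.center ℂ (Um q m)) :
    eHi q m * (z * ((κ q m ^ s : (Um q m)ˣ) : Um q m)) ∈ PP q m c := by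
  have hzc := Subalgebra.mem_center_iff.mp hz
  have h : eHi q m * (z * ((κ q m ^ s : (Um q m)ˣ) : Um q m))
      = (z * (((τ q m)⁻¹ : (Um q m)ˣ) : Um q m))
        * ((κ q m ^ (1 + s) : (Um q m)ˣ) : Um q m) := by
    rw [← mul_assoc, hzc (eHi q m), mul_assoc, eHi_kz, ← mul_assoc]
  rw [h]
  exact Qs_le_PP q m c _
    (mem_Qs q m (mul_mem hz (inv_central q m (tau_central m hq0))) _)

include hq0 in
lemma genE_mem (s : ℤ) (z : Um q m) (hz : z ∈ Subalgebra.center ℂ (Um q m)) :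
    eE q m * (z * ((κ q m ^ s : (Um q m)ˣ) : Um q m)) ∈ PP q m c := by
  have hzc := Subalgebra.mem_center_iff.mp hz
  have h1 : eE q m * (z * ((κ q m ^ s : (Um q m)ˣ) : Um q m))
      = ((q ^ 2) ^ s)⁻¹ • ((z * ((κ q m ^ s : (Um q m)ˣ) : Um q m)) * eE q m) := by
    rw [← mul_assoc, hzc (eE q m), mul_assoc, eE_kz m hq0 s, mul_smul_comm,
      ← mul_assoc]
  rw [h1, mul_E_split]
  refine Submodule.smul_mem _ _ (add_mem ?_ ?_)
  · exact Lc_le_PP q m c (mem_Lc q m c _)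
  · exact Submodule.smul_mem _ _ (Qs_le_PP q m c s (mem_Qs q m hz s))

include hq0 hq hm hc in
lemma genF_mem (s : ℤ) (z : Um q m) (hz : z ∈ Subalgebra.center ℂ (Um q m)) :
    eF q m * (z * ((κ q m ^ s : (Um q m)ˣ) : Um q m)) ∈ PP q m c := by
  have hzc := Subalgebra.mem_center_iff.mp hz
  have hCasC := cas_central hq0 hq hm
  have hCas := Subalgebra.mem_center_iff.mp hCasC
  set x : Um q m := z * ((κ q m ^ s : (Um q m)ˣ) : Um q m) with hxdef
  have h1 : eF q m * x = ((q ^ 2) ^ s) • (x * eF q m) := by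
    rw [hxdef, ← mul_assoc, hzc (eF q m), mul_assoc, eF_kz m hq0 s,
      mul_smul_comm, ← mul_assoc]
  have h2 : c • (x * eF q m) = x * (eF q m * eE q m)
      - (x * eF q m) * (eE q m - algebraMap ℂ (Um q m) c) := by
    rw [← mul_assoc, mul_E_split q m c (x * eF q m)]
    abel
  have h3 : x * (eF q m * eE q m) ∈ PP q m c := by
    rw [FE_eq, mul_sub, mul_sub, mul_smul_comm, mul_smul_comm]
    refine sub_mem (sub_mem ?_ ?_) ?_
    · have hx : x * Cas q m = (z * Cas q m)
          * ((κ q m ^ s : (Um q m)ˣ) : Um q m) := by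
        rw [hxdef, mul_assoc, hCas (((κ q m ^ s : (Um q m)ˣ) : Um q m)),
          ← mul_assoc]
      rw [hx]
      exact Qs_le_PP q m c _ (mem_Qs q m (mul_mem hz hCasC) _)
    · have hx : x * eK q m ^ m = z * ((κ q m ^ (s + (m : ℤ)) : (Um q m)ˣ) : Um q m) := by
        rw [hxdef, mul_assoc, kz_Km]
      rw [hx]
      exact Submodule.smul_mem _ _ (Qs_le_PP q m c _ (mem_Qs q m hz _))
    · have hx : x * eH q m ^ m = (z * ((τ q m ^ m : (Um q m)ˣ) : Um q m))
          * ((κ q m ^ (s + -(m : ℤ)) : (Um q m)ˣ) : Um q m) := by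
        rw [hxdef, mul_assoc, kz_Hm, ← mul_assoc]
      rw [hx]
      have htm : ((τ q m ^ m : (Um q m)ˣ) : Um q m)
          ∈ Subalgebra.center ℂ (Um q m) := pow_mem (tau_central m hq0) m
      exact Submodule.smul_mem _ _
        (Qs_le_PP q m c _ (mem_Qs q m (mul_mem hz htm) _))
  have h4 : x * eF q m ∈ PP q m c := by
    have hx : x * eF q m = c⁻¹ • (c • (x * eF q m)) := by
      rw [smul_smul, inv_mul_cancel₀ hc, one_smul]
    rw [hx, h2]
    exact Submodule.smul_mem _ _ (sub_mem h3 (Lc_le_PP q m c (mem_Lc q m c _)))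
  rw [h1]
  exact Submodule.smul_mem _ _ h4

include hq0 hq hm hc in
lemma gen_all : ∀ f : FA, ∀ x ∈ PP q m c,
    RingQuot.mkAlgHom ℂ (URel q (fm q m)) f * x ∈ PP q m c := by
  have hbase : ∀ gel : Um q m,
      (∀ (s : ℤ) (z : Um q m), z ∈ Subalgebra.center ℂ (Um q m) →
        gel * (z * ((κ q m ^ s : (Um q m)ˣ) : Um q m)) ∈ PP q m c) →
      ∀ x ∈ PP q m c, gel * x ∈ PP q m c := by
    intro gel hgel x hx
    rcases Submodule.mem_sup.mp hx with ⟨x₁, hx₁, x₂, hx₂, rfl⟩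
    rw [mul_add]
    apply add_mem
    · refine Submodule.iSup_induction (motive := fun y => gel * y ∈ PP q m c)
        (fun s => Qs q m s) hx₁ ?_ ?_ ?_
      · rintro s y ⟨z, hz, rfl⟩
        exact hgel s z hz
      · show gel * (0 : Um q m) ∈ PP q m c
        rw [mul_zero]; exact zero_mem _
      · intro a b hA hB
        show gel * (a + b) ∈ PP q m c
        rw [mul_add]
        exact add_mem hA hB
    · refine Lc_le_PP q m c ?_
      have := (Lc q m c).smul_mem gel hx₂
      rwa [smul_eq_mul] at this
  intro f
  induction f using FreeAlgebra.induction with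
  | grade0 r =>
      intro x hx
      rw [AlgHom.commutes, ← Algebra.smul_def]
      exact Submodule.smul_mem _ _ hx
  | grade1 g =>
      cases g
      · exact hbase _ (fun s z hz => genE_mem hq0 s z hz)
      · exact hbase _ (fun s z hz => genF_mem hq0 hq hm hc s z hz)
      · exact hbase _ (fun s z hz => genK_mem s z hz)
      · exact hbase _ (fun s z hz => genKi_mem s z hz)
      · exact hbase _ (fun s z hz => genH_mem hq0 s z hz)
      · exact hbase _ (fun s z hz => genHi_mem hq0 s z hz)
  | mul a b ha hb =>
      intro x hx
      rw [map_mul, mul_assoc]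
      exact ha _ (hb x hx)
  | add a b ha hb =>
      intro x hx
      rw [map_add, add_mul]
      exact add_mem (ha x hx) (hb x hx)

include hq0 hq hm hc in
lemma PP_top : ∀ u : Um q m, u ∈ PP q m c := by
  intro u
  have h1 : (1 : Um q m) ∈ PP q m c := by
    have h : (1 : Um q m) = (1 : Um q m) * ((κ q m ^ (0 : ℤ) : (Um q m)ˣ) : Um q m) := by
      simp
    rw [h]
    exact Qs_le_PP q m c _ (mem_Qs q m (one_mem _) 0)
  obtain ⟨f, rfl⟩ := RingQuot.mkAlgHom_surjective ℂ (URel q (fm q m)) u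
  have h2 := gen_all hq0 hq hm hc f 1 h1
  rwa [mul_one] at h2

end gens
end S16
namespace S16

lemma vand (q : ℂ) (m : ℕ) {V : Type*} [AddCommGroup V] [Module (Um q m) V]
    (T : Um q m) (μ : ℤ → ℂ) (hinj : Function.Injective μ) :
    ∀ (A : Finset ℤ) (v : ℤ → V),
      (∀ s ∈ A, T • v s = algebraMap ℂ (Um q m) (μ s) • v s) →
      (∑ s ∈ A, v s) = 0 → ∀ s ∈ A, v s = 0 := by
  intro A
  induction A using Finset.induction_on with
  | empty =>
      intro v _ _ s hs
      exact absurd hs (Finset.notMem_empty s)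
  | @insert a A hnot ih =>
      intro v hv hsum s hs
      have hsum' : v a + ∑ t ∈ A, v t = 0 := by
        rwa [Finset.sum_insert hnot] at hsum
      set v' : ℤ → V := fun t => algebraMap ℂ (Um q m) (μ t - μ a) • v t with hv'def
      have hv'eig : ∀ t ∈ A, T • v' t = algebraMap ℂ (Um q m) (μ t) • v' t := by
        intro t ht
        calc T • v' t
            = algebraMap ℂ (Um q m) (μ t - μ a) • (T • v t) := by
              show T • (algebraMap ℂ (Um q m) (μ t - μ a) • v t) = _
              rw [← mul_smul, ← Algebra.commutes, mul_smul]
          _ = algebraMap ℂ (Um q m) (μ t - μ a)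
              • (algebraMap ℂ (Um q m) (μ t) • v t) := by
              rw [hv t (Finset.mem_insert_of_mem ht)]
          _ = algebraMap ℂ (Um q m) (μ t) • v' t := by
              show _ = algebraMap ℂ (Um q m) (μ t)
                • (algebraMap ℂ (Um q m) (μ t - μ a) • v t)
              rw [← mul_smul, ← mul_smul, ← map_mul, ← map_mul, mul_comm]
      have hsum'' : ∑ t ∈ A, v' t = 0 := by
        have e1 : ∀ t ∈ A, v' t = algebraMap ℂ (Um q m) (μ t) • v t
            - algebraMap ℂ (Um q m) (μ a) • v t := by
          intro t ht
          show algebraMap ℂ (Um q m) (μ t - μ a) • v t = _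
          rw [map_sub, sub_smul]
        rw [Finset.sum_congr rfl e1, Finset.sum_sub_distrib]
        have e2 : ∑ t ∈ A, algebraMap ℂ (Um q m) (μ t) • v t
            = T • ∑ t ∈ A, v t := by
          rw [Finset.smul_sum]
          exact Finset.sum_congr rfl
            (fun t ht => (hv t (Finset.mem_insert_of_mem ht)).symm)
        have e3 : ∑ t ∈ A, v t = -v a := by
          have h := hsum'
          rw [add_comm] at h
          exact eq_neg_of_add_eq_zero_left h
        rw [e2, ← Finset.smul_sum, e3, smul_neg, smul_neg,
          hv a (Finset.mem_insert_self a A), sub_self]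
      have hA0 : ∀ t ∈ A, v t = 0 := by
        intro t ht
        have h0 : algebraMap ℂ (Um q m) (μ t - μ a) • v t = 0 :=
          ih v' hv'eig hsum'' t ht
        have hne : μ t - μ a ≠ 0 :=
          sub_ne_zero.mpr (fun hEq => hnot ((hinj hEq) ▸ ht))
        have h1 : algebraMap ℂ (Um q m) ((μ t - μ a)⁻¹)
            • (algebraMap ℂ (Um q m) (μ t - μ a) • v t) = v t := by
          rw [← mul_smul, ← map_mul, inv_mul_cancel₀ hne, map_one, one_smul]
        rw [← h1, h0, smul_zero]
      rcases Finset.mem_insert.mp hs with rfl | hsA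
      · have h2 : ∑ t ∈ A, v t = 0 := Finset.sum_eq_zero hA0
        rw [h2, add_zero] at hsum'
        exact hsum'
      · exact hA0 s hsA

lemma mu_inj {q c : ℂ} (hq0 : q ≠ 0) (hq : ∀ n : ℕ, 0 < n → q ^ n ≠ 1)
    (hc : c ≠ 0) :
    Function.Injective (fun s : ℤ => c * (((q ^ 2) ^ s)⁻¹ - 1)) := by
  intro s t h
  simp only at h
  have h0 : (((q ^ 2) ^ s)⁻¹ - 1) = (((q ^ 2) ^ t)⁻¹ - 1) := mul_left_cancel₀ hc h
  have h1 : (((q : ℂ) ^ 2) ^ s)⁻¹ = (((q : ℂ) ^ 2) ^ t)⁻¹ := sub_left_inj.mp h0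
  have h2 : ((q : ℂ) ^ 2) ^ s = ((q : ℂ) ^ 2) ^ t := inv_injective h1
  exact zpow_injective hq0 hq h2

lemma eig (q : ℂ) (m : ℕ) (c : ℂ) (hq0 : q ≠ 0) {V : Type*} [AddCommGroup V]
    [Module (Um q m) V] (w : V)
    (hww : eE q m • w = algebraMap ℂ (Um q m) c • w)
    (s : ℤ) (z : Um q m) (hz : z ∈ Subalgebra.center ℂ (Um q m)) :
    (eE q m - algebraMap ℂ (Um q m) c)
      • ((z * ((κ q m ^ s : (Um q m)ˣ) : Um q m)) • w)
    = algebraMap ℂ (Um q m) (c * (((q ^ 2) ^ s)⁻¹ - 1))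
      • ((z * ((κ q m ^ s : (Um q m)ˣ) : Um q m)) • w) := by
  have hzc := Subalgebra.mem_center_iff.mp hz
  set X : Um q m := ((κ q m ^ s : (Um q m)ˣ) : Um q m) with hX
  have h1 : eE q m * (z * X) = ((q ^ 2) ^ s)⁻¹ • ((z * X) * eE q m) := by
    rw [hX, ← mul_assoc, hzc (eE q m), mul_assoc, eE_kz m hq0 s, mul_smul_comm,
      ← mul_assoc]
  have key : ∀ u : V,
      algebraMap ℂ (Um q m) (((q ^ 2) ^ s)⁻¹) • (algebraMap ℂ (Um q m) c • u)
        - algebraMap ℂ (Um q m) c • u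
      = algebraMap ℂ (Um q m) (c * (((q ^ 2) ^ s)⁻¹ - 1)) • u := by
    intro u
    rw [← mul_smul, ← map_mul, mul_sub, mul_one, map_sub, sub_smul, mul_comm]
  calc (eE q m - algebraMap ℂ (Um q m) c) • ((z * X) • w)
      = (eE q m * (z * X)) • w - algebraMap ℂ (Um q m) c • ((z * X) • w) := by
        rw [sub_smul, ← mul_smul]
    _ = (((q ^ 2) ^ s)⁻¹ • ((z * X) * eE q m)) • w
        - algebraMap ℂ (Um q m) c • ((z * X) • w) := by rw [h1]
    _ = algebraMap ℂ (Um q m) (((q ^ 2) ^ s)⁻¹) • ((z * X) • (eE q m • w))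
        - algebraMap ℂ (Um q m) c • ((z * X) • w) := by
        rw [Algebra.smul_def, mul_smul, mul_smul]
    _ = algebraMap ℂ (Um q m) (((q ^ 2) ^ s)⁻¹)
          • ((z * X) • (algebraMap ℂ (Um q m) c • w))
        - algebraMap ℂ (Um q m) c • ((z * X) • w) := by rw [hww]
    _ = algebraMap ℂ (Um q m) (((q ^ 2) ^ s)⁻¹)
          • (algebraMap ℂ (Um q m) c • ((z * X) • w))
        - algebraMap ℂ (Um q m) c • ((z * X) • w) := by
        rw [← mul_smul (z * X), mul_alg q m (z * X) c, Algebra.smul_def,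
          mul_smul]
    _ = algebraMap ℂ (Um q m) (c * (((q ^ 2) ^ s)⁻¹ - 1)) • ((z * X) • w) :=
        key _

end S16

open S16

/-- Let `V` be a Whittaker module of type `c` with cyclic Whittaker vector
`w`. Then the annihilator of `w` in `U` equals `U·Z_V + U(E - c)`. -/
theorem stmt16 (q : ℂ) (hq0 : q ≠ 0) (hq : ∀ n : ℕ, 0 < n → q ^ n ≠ 1)
    (m : ℕ) (hm : 1 ≤ m) (c : ℂ) (hc : c ≠ 0)
    (V : Type*) [AddCommGroup V] [Module (Um q m) V]
    (w : V) (hw : IsWhittakerVector q m c w)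
    (hcyc : ∀ x : V, ∃ u : Um q m, u • w = x) :
    ∀ u : Um q m, u • w = 0 ↔
      u ∈ Submodule.span (Um q m) (ZVset q m V) ⊔ Lc q m c := by
  classical
  have hEw : (eE q m - algebraMap ℂ (Um q m) c) • w = 0 := by
    rw [sub_smul, show eE q m • w = algebraMap ℂ (Um q m) c • w from hw.2,
      sub_self]
  have hLcw : ∀ y ∈ Lc q m c, y • w = 0 := by
    intro y hy
    obtain ⟨a, rfl⟩ := Submodule.mem_span_singleton.mp hy
    rw [smul_eq_mul, mul_smul,
      show (uE q (fm q m) - algebraMap ℂ (Um q m) c) • w = (0 : V) from hEw,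
      smul_zero]
  intro u
  constructor
  · intro hu
    rcases Submodule.mem_sup.mp (PP_top hq0 hq hm hc u) with ⟨x, hx, l, hl, hux⟩
    rw [Submodule.mem_iSup_iff_exists_finsupp] at hx
    obtain ⟨f, hf, hfsum⟩ := hx
    have hchoice : ∀ s : ℤ, ∃ z : Um q m, z ∈ Subalgebra.center ℂ (Um q m) ∧
        z * ((κ q m ^ s : (Um q m)ˣ) : Um q m) = f s := by
      intro s
      rcases Submodule.mem_map.mp (hf s) with ⟨z, hz, hzeq⟩
      exact ⟨z, hz, hzeq⟩
    choose zz hzc hzeq using hchoice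
    have hl' : l ∈ Lc q m c := hl
    have hxw : x • w = 0 := by
      have h2 : (x + l) • w = 0 := by rw [hux]; exact hu
      rwa [add_smul, hLcw l hl', add_zero] at h2
    have hsum : ∑ s ∈ f.support, (f s) • w = 0 := by
      rw [← Finset.sum_smul, show (∑ s ∈ f.support, f s) = x from hfsum]
      exact hxw
    have heig : ∀ s ∈ f.support,
        (eE q m - algebraMap ℂ (Um q m) c) • ((f s) • w)
        = algebraMap ℂ (Um q m) (c * (((q ^ 2) ^ s)⁻¹ - 1)) • ((f s) • w) := by
      intro s _
      rw [← hzeq s]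
      exact eig q m c hq0 w hw.2 s (zz s) (hzc s)
    have hvand := vand q m (eE q m - algebraMap ℂ (Um q m) c)
      (fun s => c * (((q ^ 2) ^ s)⁻¹ - 1)) (mu_inj hq0 hq hc)
      f.support (fun s => (f s) • w) heig hsum
    have hfw : ∀ s : ℤ, (f s) • w = 0 := by
      intro s
      by_cases hss : s ∈ f.support
      · exact hvand s hss
      · rw [Finsupp.notMem_support_iff.mp hss, zero_smul]
    have hzzw : ∀ s : ℤ, zz s • w = 0 := by
      intro s
      have hzcs := Subalgebra.mem_center_iff.mp (hzc s)
      have h1 : ((κ q m ^ (-s) : (Um q m)ˣ) : Um q m)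
          * (zz s * ((κ q m ^ s : (Um q m)ˣ) : Um q m)) = zz s := by
        rw [← mul_assoc, hzcs (((κ q m ^ (-s) : (Um q m)ˣ) : Um q m)), mul_assoc,
          ← kval_add, neg_add_cancel]
        simp
      calc zz s • w
          = (((κ q m ^ (-s) : (Um q m)ˣ) : Um q m)
            * (zz s * ((κ q m ^ s : (Um q m)ˣ) : Um q m))) • w := by rw [h1]
        _ = ((κ q m ^ (-s) : (Um q m)ˣ) : Um q m)
            • ((zz s * ((κ q m ^ s : (Um q m)ˣ) : Um q m)) • w) :=
            mul_smul _ _ _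
        _ = ((κ q m ^ (-s) : (Um q m)ˣ) : Um q m) • ((f s) • w) := by
            rw [hzeq s]
        _ = 0 := by rw [hfw s, smul_zero]
    have hzzZV : ∀ s : ℤ, zz s ∈ ZVset q m V := by
      intro s
      refine ⟨hzc s, ?_⟩
      intro v
      obtain ⟨u', rfl⟩ := hcyc v
      have hzcs := Subalgebra.mem_center_iff.mp (hzc s)
      rw [← mul_smul, show zz s * u' = u' * zz s from (hzcs u').symm, mul_smul,
        hzzw s, smul_zero]
    rw [← hux]
    refine Submodule.add_mem _ ?_ (Submodule.mem_sup_right hl')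
    refine Submodule.mem_sup_left ?_
    rw [← show (f.sum fun _ xi => xi) = x from hfsum, Finsupp.sum]
    refine Submodule.sum_mem _ ?_
    intro s _
    rw [← hzeq s, show zz s * ((κ q m ^ s : (Um q m)ˣ) : Um q m)
        = ((κ q m ^ s : (Um q m)ˣ) : Um q m) * zz s from
        (Subalgebra.mem_center_iff.mp (hzc s) _).symm]
    exact Submodule.smul_mem _ _ (Submodule.subset_span (hzzZV s))
  · intro hmem
    rcases Submodule.mem_sup.mp hmem with ⟨a, haS, b, hbL, rfl⟩
    rw [add_smul, hLcw b hbL, add_zero]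
    refine Submodule.span_induction ?_ ?_ ?_ ?_ haS
    · intro z hz
      exact hz.2 w
    · exact zero_smul _ w
    · intro x y hx hy hxw hyw
      rw [add_smul, hxw, hyw, add_zero]
    · intro r x hx hxw
      rw [smul_eq_mul, mul_smul, hxw, smul_zero]
end

section
/- Let V be a Whittaker module of type c with cyclic Whittaker vector w. Then a nonzero vector v ∈ V satisfies Ev = cv (i.e. v is a Whittaker vector of type c) if and only if v = uw for some u ∈ Z(U). -/
/-! ### Auxiliary material for `stmt18` -/

noncomputable section S18
namespace S18

open FreeAlgebra

/-- General helper: semiconjugation propagates to powers. -/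
lemma pow_semiconj {A : Type*} [Ring A] [Algebra ℂ A] {a b : A} {s : ℂ}
    (h : a * b = s • (b * a)) : ∀ n : ℕ, a ^ n * b = s ^ n • (b * a ^ n) := by
  intro n
  induction n with
  | zero => simp
  | succ n ih =>
    calc a ^ (n+1) * b = a ^ n * (a * b) := by rw [pow_succ, mul_assoc]
      _ = s • (a ^ n * (b * a)) := by rw [h, mul_smul_comm]
      _ = s • ((s ^ n • (b * a ^ n)) * a) := by rw [← mul_assoc, ih]
      _ = (s ^ n * s) • (b * (a ^ n * a)) := by
          rw [smul_mul_assoc, smul_smul, mul_assoc, mul_comm s]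
      _ = s ^ (n+1) • (b * a ^ (n+1)) := by rw [← pow_succ, ← pow_succ]

lemma unit_semiconj_inv {A : Type*} [Ring A] [Algebra ℂ A] {u : Aˣ} {b : A} {s : ℂ}
    (hs : s ≠ 0) (h : (u : A) * b = s • (b * (u : A))) :
    (↑u⁻¹ : A) * b = s⁻¹ • (b * (↑u⁻¹ : A)) := by
  have h1 : (u : A) * (s⁻¹ • (b * (↑u⁻¹ : A))) = b := by
    rw [mul_smul_comm, ← mul_assoc, h, smul_mul_assoc, smul_smul, inv_mul_cancel₀ hs,
      one_smul, Units.mul_inv_cancel_right]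
  have h0 : (u : A) * ((↑u⁻¹ : A) * b) = b := Units.mul_inv_cancel_left u b
  exact (Units.mul_right_inj u).mp (h0.trans h1.symm)

/-- General helper: semiconjugation with a unit propagates to integer powers. -/
lemma zpow_semiconj {A : Type*} [Ring A] [Algebra ℂ A] {u : Aˣ} {b : A} {s : ℂ}
    (hs : s ≠ 0) (h : (u : A) * b = s • (b * (u : A))) (d : ℤ) :
    (↑(u ^ d) : A) * b = s ^ d • (b * (↑(u ^ d) : A)) := by
  induction d using Int.induction_on with
  | zero => simp
  | succ n ih =>
    calc (↑(u ^ ((n : ℤ) + 1)) : A) * b = ↑(u ^ (n : ℤ)) * ((u : A) * b) := by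
          rw [zpow_add_one, Units.val_mul, mul_assoc]
      _ = s • ((↑(u ^ (n : ℤ)) : A) * (b * (u : A))) := by rw [h, mul_smul_comm]
      _ = s • ((s ^ (n : ℤ) • (b * (↑(u ^ (n : ℤ)) : A))) * (u : A)) := by
          rw [← mul_assoc, ih]
      _ = (s ^ (n : ℤ) * s) • (b * ((↑(u ^ (n : ℤ)) : A) * (u : A))) := by
          rw [smul_mul_assoc, smul_smul, mul_assoc, mul_comm s]
      _ = s ^ ((n : ℤ) + 1) • (b * (↑(u ^ ((n : ℤ) + 1)) : A)) := by
          rw [zpow_add_one, Units.val_mul, zpow_add_one₀ hs]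
  | pred n ih =>
    have hinv := unit_semiconj_inv hs h
    calc (↑(u ^ (-(n : ℤ) - 1)) : A) * b = ↑(u ^ (-(n : ℤ))) * ((↑u⁻¹ : A) * b) := by
          rw [zpow_sub_one, Units.val_mul, mul_assoc]
      _ = s⁻¹ • ((↑(u ^ (-(n : ℤ))) : A) * (b * (↑u⁻¹ : A))) := by rw [hinv, mul_smul_comm]
      _ = s⁻¹ • ((s ^ (-(n : ℤ)) • (b * (↑(u ^ (-(n : ℤ))) : A))) * (↑u⁻¹ : A)) := by
          rw [← mul_assoc, ih]
      _ = (s ^ (-(n : ℤ)) * s⁻¹) • (b * ((↑(u ^ (-(n : ℤ))) : A) * (↑u⁻¹ : A))) := by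
          rw [smul_mul_assoc, smul_smul, mul_assoc, mul_comm s⁻¹]
      _ = s ^ (-(n : ℤ) - 1) • (b * (↑(u ^ (-(n : ℤ) - 1)) : A)) := by
          rw [zpow_sub_one, Units.val_mul, zpow_sub_one₀ hs]

lemma unit_inv_central {A : Type*} [Ring A] [Algebra ℂ A] (u : Aˣ)
    (h : (u : A) ∈ Subalgebra.center ℂ A) : (↑u⁻¹ : A) ∈ Subalgebra.center ℂ A := by
  rw [Subalgebra.mem_center_iff] at h ⊢
  intro b
  calc b * (↑u⁻¹ : A) = (↑u⁻¹ : A) * ((u : A) * (b * (↑u⁻¹ : A))) :=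
        (Units.inv_mul_cancel_left u _).symm
    _ = (↑u⁻¹ : A) * (((u : A) * b) * (↑u⁻¹ : A)) := by rw [mul_assoc]
    _ = (↑u⁻¹ : A) * ((b * (u : A)) * (↑u⁻¹ : A)) := by rw [← h b]
    _ = (↑u⁻¹ : A) * b := by rw [Units.mul_inv_cancel_right]

lemma unit_zpow_central {A : Type*} [Ring A] [Algebra ℂ A] (u : Aˣ)
    (h : (u : A) ∈ Subalgebra.center ℂ A) (d : ℤ) :
    (↑(u ^ d) : A) ∈ Subalgebra.center ℂ A := by
  cases d with
  | ofNat n =>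
    rw [Int.ofNat_eq_coe, zpow_natCast, Units.val_pow_eq_pow_val]
    exact pow_mem h n
  | negSucc n =>
    rw [zpow_negSucc, ← inv_pow, Units.val_pow_eq_pow_val]
    exact pow_mem (unit_inv_central u h) (n + 1)


/-! ### Generators and relations of `U_q(f_m(K,H))` -/

variable (q : ℂ) (m : ℕ)

def mk : FA →ₐ[ℂ] Um q m := RingQuot.mkAlgHom ℂ (URel q (fm q m))

def E : Um q m := mk q m gE
def F : Um q m := mk q m gF
def K : Um q m := mk q m gK
def Ki : Um q m := mk q m gKi
def H : Um q m := mk q m gH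
def Hi : Um q m := mk q m gHi

lemma E_eq_uE : E q m = uE q (fm q m) := rfl

lemma rel {x y : FA} (h : URel q (fm q m) x y) : mk q m x = mk q m y :=
  RingQuot.mkAlgHom_rel ℂ h

lemma rKKi : K q m * Ki q m = 1 := by
  simpa [K, Ki] using rel q m URel.KKi

lemma rKiK : Ki q m * K q m = 1 := by
  simpa [Ki, K] using rel q m URel.KiK

lemma rHHi : H q m * Hi q m = 1 := by
  simpa [H, Hi] using rel q m URel.HHi

lemma rHiH : Hi q m * H q m = 1 := by
  simpa [Hi, H] using rel q m URel.HiH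

lemma rKH : K q m * H q m = H q m * K q m := by
  simpa [K, H] using rel q m URel.KH

lemma rKE : K q m * E q m = q ^ 2 • (E q m * K q m) := by
  simpa [K, E] using rel q m URel.KE

lemma rKF : K q m * F q m = (q ^ 2)⁻¹ • (F q m * K q m) := by
  simpa [K, F] using rel q m URel.KF

lemma rHE : H q m * E q m = (q ^ 2)⁻¹ • (E q m * H q m) := by
  simpa [H, E] using rel q m URel.HE

lemma rHF : H q m * F q m = q ^ 2 • (F q m * H q m) := by
  simpa [H, F] using rel q m URel.HF

lemma rEF : E q m * F q m - F q m * E q m = (q - q⁻¹)⁻¹ • (K q m ^ m - H q m ^ m) := by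
  have h := rel q m (URel.EF (q := q) (r := fm q m))
  have e : mk q m (fm q m) = mk q m ((q - q⁻¹)⁻¹ • (gK ^ m - gH ^ m)) := rfl
  rw [e] at h
  simpa [E, F, K, H, mk, map_smul, map_sub, map_pow, map_mul] using h


/-! ### Derived relations -/

lemma rEK (hq0 : q ≠ 0) : E q m * K q m = (q ^ 2)⁻¹ • (K q m * E q m) := by
  rw [rKE, inv_smul_smul₀ (pow_ne_zero 2 hq0)]

lemma rFK (hq0 : q ≠ 0) : F q m * K q m = q ^ 2 • (K q m * F q m) := by
  rw [rKF, smul_inv_smul₀ (pow_ne_zero 2 hq0)]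

lemma rEH (hq0 : q ≠ 0) : E q m * H q m = q ^ 2 • (H q m * E q m) := by
  rw [rHE, smul_inv_smul₀ (pow_ne_zero 2 hq0)]

lemma rFH (hq0 : q ≠ 0) : F q m * H q m = (q ^ 2)⁻¹ • (H q m * F q m) := by
  rw [rHF, inv_smul_smul₀ (pow_ne_zero 2 hq0)]

/-! ### Scalars and the Casimir element -/

def ga : ℂ := (q - q⁻¹)⁻¹
def al : ℂ := ((q - q⁻¹) * (q ^ (2 * m) - 1))⁻¹
def be : ℂ := q ^ (2 * m) * al q m

/-- The Casimir element `Ω = EF + α K^m + β H^m`. -/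
def Om : Um q m := E q m * F q m + al q m • K q m ^ m + be q m • H q m ^ m

variable {q}

lemma hqq (hq0 : q ≠ 0) (hq : ∀ n : ℕ, 0 < n → q ^ n ≠ 1) : q - q⁻¹ ≠ 0 := by
  intro h
  apply hq 2 two_pos
  have h1 : q = q⁻¹ := sub_eq_zero.mp h
  have h3 := mul_inv_cancel₀ hq0
  rw [← h1] at h3
  calc q ^ 2 = q * q := sq q
    _ = 1 := h3

lemma hm2 (hq : ∀ n : ℕ, 0 < n → q ^ n ≠ 1) (hm : 1 ≤ m) : q ^ (2 * m) - 1 ≠ 0 :=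
  sub_ne_zero.mpr (hq (2 * m) (by omega))

variable (q)

lemma hFE : F q m * E q m = E q m * F q m - ga q • (K q m ^ m - H q m ^ m) := by
  rw [ga, ← rEF]; abel

lemma omE (hq0 : q ≠ 0) (hq : ∀ n : ℕ, 0 < n → q ^ n ≠ 1) (hm : 1 ≤ m) :
    Om q m * E q m = E q m * Om q m := by
  have h1 := hqq hq0 hq
  have h2 := hm2 m hq hm
  have hKmE := pow_semiconj (rKE q m) m
  have hHmE := pow_semiconj (rHE q m) m
  have hx : q ^ (2*m) * (q ^ (2*m))⁻¹ = 1 := mul_inv_cancel₀ (pow_ne_zero _ hq0)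
  have hpm : ((q:ℂ) ^ 2) ^ m = q ^ (2*m) := (pow_mul q 2 m).symm
  have hpmi : (((q:ℂ) ^ 2)⁻¹) ^ m = (q ^ (2*m))⁻¹ := by rw [inv_pow, pow_mul]
  have l1 : al q m * (q ^ (2*m) - 1) = ga q := by
    simp only [al, ga]
    rw [mul_inv, mul_assoc, inv_mul_cancel₀ h2, mul_one]
  rw [Om, add_mul, add_mul, smul_mul_assoc, smul_mul_assoc, hKmE, hHmE, mul_assoc, hFE]
  simp only [mul_add, mul_sub, mul_smul_comm, smul_sub, smul_smul]
  match_scalars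
  · ring
  · rw [hpm]; linear_combination l1
  · rw [hpmi]; simp only [be]; linear_combination (al q m) * hx - l1

lemma omF (hq0 : q ≠ 0) (hq : ∀ n : ℕ, 0 < n → q ^ n ≠ 1) (hm : 1 ≤ m) :
    Om q m * F q m = F q m * Om q m := by
  have h1 := hqq hq0 hq
  have h2 := hm2 m hq hm
  have hKmF := pow_semiconj (rKF q m) m
  have hHmF := pow_semiconj (rHF q m) m
  have hx : q ^ (2*m) * (q ^ (2*m))⁻¹ = 1 := mul_inv_cancel₀ (pow_ne_zero _ hq0)
  have hpm : ((q:ℂ) ^ 2) ^ m = q ^ (2*m) := (pow_mul q 2 m).symm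
  have hpmi : (((q:ℂ) ^ 2)⁻¹) ^ m = (q ^ (2*m))⁻¹ := by rw [inv_pow, pow_mul]
  have l1 : al q m * (q ^ (2*m) - 1) = ga q := by
    simp only [al, ga]
    rw [mul_inv, mul_assoc, inv_mul_cancel₀ h2, mul_one]
  rw [Om, add_mul, add_mul, smul_mul_assoc, smul_mul_assoc, mul_add, mul_add,
    mul_smul_comm, mul_smul_comm, ← mul_assoc, hFE]
  simp only [sub_mul, smul_mul_assoc, smul_sub, smul_smul, hKmF, hHmF]
  match_scalars
  · ring
  · rw [hpmi]; linear_combination (al q m) * hx - ((q ^ (2*m) : ℂ))⁻¹ * l1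
  · rw [hpm]; simp only [be]; linear_combination ((q ^ (2*m) : ℂ)) * l1

lemma omK (hq0 : q ≠ 0) : Om q m * K q m = K q m * Om q m := by
  have hs : (q : ℂ) ^ 2 ≠ 0 := pow_ne_zero 2 hq0
  have cKH : Commute (K q m) (H q m) := rKH q m
  have hEFK : E q m * F q m * K q m = K q m * (E q m * F q m) := by
    rw [mul_assoc, rFK q m hq0, mul_smul_comm, ← mul_assoc, rEK q m hq0, smul_mul_assoc,
      smul_smul, mul_inv_cancel₀ hs, one_smul, mul_assoc]
  have hK1 : K q m ^ m * K q m = K q m * K q m ^ m := by rw [← pow_succ, ← pow_succ']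
  have hK2 : H q m ^ m * K q m = K q m * H q m ^ m := (cKH.symm.pow_left m).eq
  rw [Om, add_mul, add_mul, smul_mul_assoc, smul_mul_assoc, hEFK, hK1, hK2,
    mul_add, mul_add, mul_smul_comm, mul_smul_comm]

lemma omH (hq0 : q ≠ 0) : Om q m * H q m = H q m * Om q m := by
  have hs : (q : ℂ) ^ 2 ≠ 0 := pow_ne_zero 2 hq0
  have cKH : Commute (K q m) (H q m) := rKH q m
  have hEFH : E q m * F q m * H q m = H q m * (E q m * F q m) := by
    rw [mul_assoc, rFH q m hq0, mul_smul_comm, ← mul_assoc, rEH q m hq0, smul_mul_assoc,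
      smul_smul, inv_mul_cancel₀ hs, one_smul, mul_assoc]
  have hH1 : K q m ^ m * H q m = H q m * K q m ^ m := (cKH.pow_left m).eq
  have hH2 : H q m ^ m * H q m = H q m * H q m ^ m := by rw [← pow_succ, ← pow_succ']
  rw [Om, add_mul, add_mul, smul_mul_assoc, smul_mul_assoc, hEFH, hH1, hH2,
    mul_add, mul_add, mul_smul_comm, mul_smul_comm]

/-! ### Units -/

def Ku : (Um q m)ˣ := ⟨K q m, Ki q m, rKKi q m, rKiK q m⟩
def Hu : (Um q m)ˣ := ⟨H q m, Hi q m, rHHi q m, rHiH q m⟩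
def Cu : (Um q m)ˣ := Ku q m * Hu q m

lemma Ku_val : (↑(Ku q m) : Um q m) = K q m := rfl
lemma Hu_val : (↑(Hu q m) : Um q m) = H q m := rfl
lemma Ku_inv_val : (↑(Ku q m)⁻¹ : Um q m) = Ki q m := rfl
lemma Hu_inv_val : (↑(Hu q m)⁻¹ : Um q m) = Hi q m := rfl
lemma Cu_val : (↑(Cu q m) : Um q m) = K q m * H q m := rfl

lemma cCE (hq0 : q ≠ 0) : Commute (↑(Cu q m) : Um q m) (E q m) := by
  have hs : (q : ℂ) ^ 2 ≠ 0 := pow_ne_zero 2 hq0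
  show K q m * H q m * E q m = E q m * (K q m * H q m)
  rw [mul_assoc, rHE, mul_smul_comm, ← mul_assoc, rKE, smul_mul_assoc, smul_smul,
    inv_mul_cancel₀ hs, one_smul, mul_assoc]

lemma cCF (hq0 : q ≠ 0) : Commute (↑(Cu q m) : Um q m) (F q m) := by
  have hs : (q : ℂ) ^ 2 ≠ 0 := pow_ne_zero 2 hq0
  show K q m * H q m * F q m = F q m * (K q m * H q m)
  rw [mul_assoc, rHF, mul_smul_comm, ← mul_assoc, rKF, smul_mul_assoc, smul_smul,
    mul_inv_cancel₀ hs, one_smul, mul_assoc]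

lemma cKC : Commute (K q m) (↑(Cu q m) : Um q m) := by
  have cKH : Commute (K q m) (H q m) := rKH q m
  rw [Cu_val]
  exact (Commute.refl (K q m)).mul_right cKH

lemma cHC : Commute (H q m) (↑(Cu q m) : Um q m) := by
  have cKH : Commute (K q m) (H q m) := rKH q m
  rw [Cu_val]
  exact cKH.symm.mul_right (Commute.refl (H q m))

lemma cKuCu : Commute (Ku q m) (Cu q m) := by
  apply Units.ext
  have := cKC q m
  exact this

/-! ### Generation and the center -/

lemma top_gen : Algebra.adjoin ℂ (Set.range fun g : Gen => mk q m (ι ℂ g)) = ⊤ := by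
  have h1 : (Set.range fun g : Gen => mk q m (ι ℂ g)) = mk q m '' Set.range (ι ℂ) := by
    rw [← Set.range_comp]; rfl
  rw [h1, ← AlgHom.map_adjoin, FreeAlgebra.adjoin_range_ι, Algebra.map_top,
    AlgHom.range_eq_top]
  exact RingQuot.mkAlgHom_surjective ℂ _

lemma commute_all {x : Um q m} (hE : Commute (E q m) x) (hF : Commute (F q m) x)
    (hK : Commute (K q m) x) (hKi : Commute (Ki q m) x)
    (hH : Commute (H q m) x) (hHi : Commute (Hi q m) x) :
    x ∈ Subalgebra.center ℂ (Um q m) := by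
  rw [Subalgebra.mem_center_iff]
  intro y
  have hy : y ∈ Algebra.adjoin ℂ (Set.range fun g : Gen => mk q m (ι ℂ g)) := by
    rw [top_gen]; trivial
  induction hy using Algebra.adjoin_induction with
  | mem z hz =>
    obtain ⟨g, rfl⟩ := hz
    cases g
    · exact hE
    · exact hF
    · exact hK
    · exact hKi
    · exact hH
    · exact hHi
  | algebraMap r => exact Algebra.commutes r x
  | add a b ha hb hpa hpb => rw [add_mul, mul_add, hpa, hpb]
  | mul a b ha hb hpa hpb => rw [mul_assoc, hpb, ← mul_assoc, hpa, mul_assoc]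

lemma om_central (hq0 : q ≠ 0) (hq : ∀ n : ℕ, 0 < n → q ^ n ≠ 1) (hm : 1 ≤ m) :
    Om q m ∈ Subalgebra.center ℂ (Um q m) := by
  have cK : Commute (Om q m) (↑(Ku q m) : Um q m) := omK q m hq0
  have cH : Commute (Om q m) (↑(Hu q m) : Um q m) := omH q m hq0
  exact commute_all q m ((omE q m hq0 hq hm).symm) ((omF q m hq0 hq hm).symm)
    ((omK q m hq0).symm) (cK.units_inv_right).symm
    ((omH q m hq0).symm) (cH.units_inv_right).symm

lemma cu_central (hq0 : q ≠ 0) : (↑(Cu q m) : Um q m) ∈ Subalgebra.center ℂ (Um q m) := by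
  have hKC := cKC q m
  have hHC := cHC q m
  have hKiC : Commute (Ki q m) (↑(Cu q m) : Um q m) := by
    have : Commute (↑(Cu q m) : Um q m) (↑(Ku q m)⁻¹ : Um q m) :=
      Commute.units_inv_right hKC.symm
    exact this.symm
  have hHiC : Commute (Hi q m) (↑(Cu q m) : Um q m) := by
    have : Commute (↑(Cu q m) : Um q m) (↑(Hu q m)⁻¹ : Um q m) :=
      Commute.units_inv_right hHC.symm
    exact this.symm
  exact commute_all q m (cCE q m hq0).symm (cCF q m hq0).symm hKC hKiC hHC hHiC


/-! ### The family `ν_{a,b,d} = Ω^a C^b K^d` -/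

lemma cOmCu (hq0 : q ≠ 0) : Commute (Om q m) (↑(Cu q m) : Um q m) := by
  have c1 : Commute (Om q m) (K q m) := omK q m hq0
  have c2 : Commute (Om q m) (H q m) := omH q m hq0
  rw [Cu_val]
  exact c1.mul_right c2

def nu (a : ℕ) (b d : ℤ) : Um q m :=
  Om q m ^ a * ↑(Cu q m ^ b * Ku q m ^ d)

lemma nu_one : nu q m 0 0 0 = 1 := by
  simp [nu]

lemma unit_eq (b d b' d' : ℤ) :
    Cu q m ^ b * Ku q m ^ d * (Cu q m ^ b' * Ku q m ^ d') =
      Cu q m ^ (b + b') * Ku q m ^ (d + d') := by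
  have hKC : Commute (Ku q m) (Cu q m) := cKuCu q m
  have h1 : Ku q m ^ d * Cu q m ^ b' = Cu q m ^ b' * Ku q m ^ d :=
    (hKC.zpow_zpow d b').eq
  calc Cu q m ^ b * Ku q m ^ d * (Cu q m ^ b' * Ku q m ^ d')
      = Cu q m ^ b * (Ku q m ^ d * Cu q m ^ b') * Ku q m ^ d' := by
        rw [mul_assoc, mul_assoc, mul_assoc]
    _ = Cu q m ^ b * (Cu q m ^ b' * Ku q m ^ d) * Ku q m ^ d' := by rw [h1]
    _ = Cu q m ^ (b + b') * Ku q m ^ (d + d') := by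
        rw [← mul_assoc, ← zpow_add, mul_assoc, ← zpow_add]

lemma cOmX (hq0 : q ≠ 0) (b d : ℤ) :
    Commute (Om q m) (↑(Cu q m ^ b * Ku q m ^ d) : Um q m) := by
  have c1 : Commute (Om q m) (↑(Ku q m) : Um q m) := omK q m hq0
  rw [Units.val_mul]
  exact ((cOmCu q m hq0).units_zpow_right b).mul_right (c1.units_zpow_right d)

lemma nu_mul (hq0 : q ≠ 0) (a a' : ℕ) (b b' d d' : ℤ) :
    nu q m a b d * nu q m a' b' d' = nu q m (a + a') (b + b') (d + d') := by
  have hX : Commute (↑(Cu q m ^ b * Ku q m ^ d) : Um q m) (Om q m ^ a') :=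
    ((cOmX q m hq0 b d).pow_left a').symm
  unfold nu
  rw [mul_assoc, ← mul_assoc (↑(Cu q m ^ b * Ku q m ^ d) : Um q m), hX.eq, mul_assoc,
    ← mul_assoc, ← pow_add, ← Units.val_mul, unit_eq]

lemma nu_central (hq0 : q ≠ 0) (hq : ∀ n : ℕ, 0 < n → q ^ n ≠ 1) (hm : 1 ≤ m)
    (a : ℕ) (b : ℤ) : nu q m a b 0 ∈ Subalgebra.center ℂ (Um q m) := by
  have h1 : nu q m a b 0 = Om q m ^ a * ↑(Cu q m ^ b) := by
    unfold nu; rw [zpow_zero, mul_one]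
  rw [h1]
  exact mul_mem (pow_mem (om_central q m hq0 hq hm) a)
    (unit_zpow_central (Cu q m) (cu_central q m hq0) b)

lemma hK_nu : K q m = nu q m 0 0 1 := by
  unfold nu
  rw [pow_zero, one_mul, zpow_zero, one_mul, zpow_one]
  rfl

lemma hKi_nu : Ki q m = nu q m 0 0 (-1) := by
  unfold nu
  rw [pow_zero, one_mul, zpow_zero, one_mul, zpow_neg_one]
  rfl

lemma hHu_eq : Hu q m = (Ku q m)⁻¹ * Cu q m := by
  unfold Cu
  rw [inv_mul_cancel_left]

lemma hH_nu : H q m = nu q m 0 1 (-1) := by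
  have h1 : Cu q m ^ (1:ℤ) * Ku q m ^ (-1:ℤ) = Hu q m := by
    rw [zpow_one, zpow_neg_one, hHu_eq, (cKuCu q m).inv_left.eq]
  unfold nu
  rw [pow_zero, one_mul, h1, Hu_val]

lemma hHi_nu : Hi q m = nu q m 0 (-1) 1 := by
  have h1 : Cu q m ^ (-1:ℤ) * Ku q m ^ (1:ℤ) = (Hu q m)⁻¹ := by
    rw [zpow_one, zpow_neg_one, hHu_eq, mul_inv_rev, inv_inv]
  unfold nu
  rw [pow_zero, one_mul, h1]
  rfl

lemma hKm_nu : (K q m) ^ m = nu q m 0 0 (m : ℤ) := by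
  unfold nu
  rw [pow_zero, one_mul, zpow_zero, one_mul, zpow_natCast, Units.val_pow_eq_pow_val]
  rfl

lemma hHm_nu : (H q m) ^ m = nu q m 0 (m : ℤ) (-(m : ℤ)) := by
  have h1 : Cu q m ^ (m:ℤ) * Ku q m ^ (-(m:ℤ)) = Hu q m ^ (m:ℤ) := by
    rw [hHu_eq, (cKuCu q m).inv_left.mul_zpow, inv_zpow, ← zpow_neg]
    exact ((cKuCu q m).zpow_zpow (-(m:ℤ)) (m:ℤ)).eq.symm
  unfold nu
  rw [pow_zero, one_mul, h1, zpow_natCast, Units.val_pow_eq_pow_val]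
  rfl

lemma hOm_nu : Om q m = nu q m 1 0 0 := by
  simp [nu]

lemma hEFOm : E q m * F q m = Om q m - al q m • K q m ^ m - be q m • H q m ^ m := by
  rw [Om]; abel

lemma hFEOm : F q m * E q m =
    Om q m - (al q m + ga q) • K q m ^ m - (be q m - ga q) • H q m ^ m := by
  rw [hFE q m, hEFOm]
  module


/-! ### The key theorem -/

theorem key (hq0 : q ≠ 0) (hq : ∀ n : ℕ, 0 < n → q ^ n ≠ 1) (hm : 1 ≤ m)
    {c : ℂ} (hc : c ≠ 0) {V : Type*} [AddCommGroup V] [Module (Um q m) V] [Module ℂ V]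
    (hcomp : ∀ (a : ℂ) (x : V), a • x = (algebraMap ℂ (Um q m) a) • x)
    {w : V} (hww : E q m • w = c • w)
    (hcyc : ∀ x : V, ∃ u : Um q m, u • w = x) {v : V}
    (hv : E q m • v = c • v) :
    ∃ u ∈ Subalgebra.center ℂ (Um q m), u • w = v := by
  have hs0 : ((q:ℂ) ^ 2) ≠ 0 := pow_ne_zero 2 hq0
  have hs2 : ((q:ℂ) ^ 2)⁻¹ ≠ 0 := inv_ne_zero hs0
  have scomm : ∀ (a : ℂ) (u : Um q m) (x : V), u • a • x = a • u • x := fun a u x => by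
    rw [hcomp, hcomp, ← mul_smul, ← mul_smul, Algebra.commutes]
  have hsm : ∀ (a : ℂ) (u : Um q m) (x : V), (a • u) • x = a • u • x := fun a u x => by
    rw [Algebra.smul_def, mul_smul, ← hcomp]
  let Ee : Module.End ℂ V :=
    { toFun := fun x => E q m • x
      map_add' := fun x y => smul_add _ x y
      map_smul' := fun a x => scomm a _ x }
  have act1 : ∀ (u : Um q m), Commute (E q m) u → ∀ (μ : ℂ) (x : V),
      E q m • x = μ • x → E q m • (u • x) = μ • (u • x) := by
    intro u hu μ x hx
    rw [← mul_smul, hu.eq, mul_smul, hx, scomm]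
  have step1 : ∀ d : ℤ, E q m • ((↑(Ku q m ^ d) : Um q m) • w)
      = ((((q:ℂ) ^ 2)⁻¹) ^ d * c) • ((↑(Ku q m ^ d) : Um q m) • w) := by
    intro d
    have hKE' : (↑(Ku q m) : Um q m) * E q m = (q:ℂ) ^ 2 • (E q m * ↑(Ku q m)) := rKE q m
    have h1 := zpow_semiconj hs0 hKE' d
    have hsc : E q m * ↑(Ku q m ^ d) =
        (((q:ℂ) ^ 2)⁻¹) ^ d • ((↑(Ku q m ^ d) : Um q m) * E q m) := by
      rw [h1, smul_smul, ← mul_zpow, inv_mul_cancel₀ hs0, one_zpow, one_smul]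
    rw [← mul_smul, hsc, hsm, mul_smul, hww, scomm, smul_smul]
  have hEnu : ∀ (a : ℕ) (b d : ℤ), E q m • (nu q m a b d • w)
      = ((((q:ℂ) ^ 2)⁻¹) ^ d * c) • (nu q m a b d • w) := by
    intro a b d
    have hdecomp : nu q m a b d • w
        = Om q m ^ a • ((↑(Cu q m ^ b) : Um q m) • ((↑(Ku q m ^ d) : Um q m) • w)) := by
      rw [nu, Units.val_mul, mul_smul, mul_smul]
    have c1 : Commute (E q m) ((↑(Cu q m ^ b) : Um q m)) :=
      (cCE q m hq0).symm.units_zpow_right b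
    have c2 : Commute (E q m) (Om q m ^ a) :=
      (show Commute (Om q m) (E q m) from omE q m hq0 hq hm).symm.pow_right a
    rw [hdecomp]
    exact act1 _ c2 _ _ (act1 _ c1 _ _ (step1 d))
  set GenSet : Set V := {x | ∃ (a : ℕ) (b d : ℤ), nu q m a b d • w = x} with hGenSet
  set Wsp : Submodule ℂ V := Submodule.span ℂ GenSet with hWsp
  have hmemW : ∀ (a : ℕ) (b d : ℤ), nu q m a b d • w ∈ Wsp :=
    fun a b d => Submodule.subset_span ⟨a, b, d, rfl⟩
  have hgen : ∀ u : Um q m, (∀ (a : ℕ) (b d : ℤ), u • (nu q m a b d • w) ∈ Wsp) →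
      ∀ x, x ∈ Wsp → u • x ∈ Wsp := by
    intro u hu x hx
    induction hx using Submodule.span_induction with
    | mem y hy => obtain ⟨a, b, d, rfl⟩ := hy; exact hu a b d
    | zero => rw [smul_zero]; exact zero_mem _
    | add y z hy hz ihy ihz => rw [smul_add]; exact add_mem ihy ihz
    | smul r y hy ih => rw [scomm]; exact Wsp.smul_mem r ih
  have hnuact : ∀ (a' : ℕ) (b' d' : ℤ) (x : V), x ∈ Wsp → nu q m a' b' d' • x ∈ Wsp := by
    intro a' b' d'
    exact hgen _ (fun a b d => by rw [← mul_smul, nu_mul q m hq0]; exact hmemW _ _ _)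
  have hFw : F q m • w = c⁻¹ • (nu q m 1 0 0 • w)
      - (c⁻¹ * (al q m + ga q)) • (nu q m 0 0 (m:ℤ) • w)
      - (c⁻¹ * (be q m - ga q)) • (nu q m 0 (m:ℤ) (-(m:ℤ)) • w) := by
    have h5 : c • (F q m • w) = nu q m 1 0 0 • w
        - (al q m + ga q) • (nu q m 0 0 (m:ℤ) • w)
        - (be q m - ga q) • (nu q m 0 (m:ℤ) (-(m:ℤ)) • w) := by
      have e1 : c • (F q m • w) = (F q m * E q m) • w := by
        rw [mul_smul, hww, scomm]
      rw [e1, hFEOm q m, sub_smul, sub_smul, hsm, hsm, hKm_nu, hHm_nu, hOm_nu]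
    calc F q m • w = c⁻¹ • (c • (F q m • w)) := (inv_smul_smul₀ hc _).symm
      _ = _ := by rw [h5, smul_sub, smul_sub, smul_smul, smul_smul]
  have semiF : ∀ (a : ℕ) (b d : ℤ), F q m • (nu q m a b d • w)
      = (((q:ℂ) ^ 2) ^ d) • (nu q m a b d • (F q m • w)) := by
    intro a b d
    have hdecomp : ∀ x : V, nu q m a b d • x
        = Om q m ^ a • ((↑(Cu q m ^ b) : Um q m) • ((↑(Ku q m ^ d) : Um q m) • x)) := by
      intro x; rw [nu, Units.val_mul, mul_smul, mul_smul]
    have c2 : Commute (F q m) (Om q m ^ a) :=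
      (show Commute (Om q m) (F q m) from omF q m hq0 hq hm).symm.pow_right a
    have c1 : Commute (F q m) ((↑(Cu q m ^ b) : Um q m)) :=
      (cCF q m hq0).symm.units_zpow_right b
    have hKF' : (↑(Ku q m) : Um q m) * F q m = ((q:ℂ) ^ 2)⁻¹ • (F q m * ↑(Ku q m)) := rKF q m
    have h1 := zpow_semiconj hs2 hKF' d
    have hsc : F q m * ↑(Ku q m ^ d) =
        (((q:ℂ) ^ 2) ^ d) • ((↑(Ku q m ^ d) : Um q m) * F q m) := by
      rw [h1, smul_smul, ← mul_zpow, mul_inv_cancel₀ hs0, one_zpow, one_smul]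
    rw [hdecomp w, ← mul_smul, c2.eq, mul_smul, ← mul_smul (F q m), c1.eq, mul_smul,
      ← mul_smul (F q m), hsc, hsm, mul_smul, scomm, scomm, hdecomp (F q m • w)]
  have hFst : ∀ (a : ℕ) (b d : ℤ), F q m • (nu q m a b d • w) ∈ Wsp := by
    intro a b d
    rw [semiF a b d, hFw]
    apply Wsp.smul_mem
    rw [smul_sub, smul_sub]
    refine sub_mem (sub_mem ?_ ?_) ?_ <;>
      · rw [scomm, ← mul_smul, nu_mul q m hq0]
        exact Wsp.smul_mem _ (hmemW _ _ _)
  have hstab : ∀ (u : Um q m) (x : V), x ∈ Wsp → u • x ∈ Wsp := by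
    intro u
    have hu : u ∈ Algebra.adjoin ℂ (Set.range fun g : Gen => mk q m (FreeAlgebra.ι ℂ g)) := by
      rw [top_gen]; trivial
    induction hu using Algebra.adjoin_induction with
    | mem z hz =>
      obtain ⟨g, rfl⟩ := hz
      cases g
      · exact hgen _ (fun a b d => by
          rw [show (mk q m (FreeAlgebra.ι ℂ Gen.E)) • (nu q m a b d • w)
              = E q m • (nu q m a b d • w) from rfl, hEnu]
          exact Wsp.smul_mem _ (hmemW a b d))
      · exact hgen _ hFst
      · intro x hx
        show K q m • x ∈ Wsp
        rw [hK_nu q m]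
        exact hnuact 0 0 1 x hx
      · intro x hx
        show Ki q m • x ∈ Wsp
        rw [hKi_nu q m]
        exact hnuact 0 0 (-1) x hx
      · intro x hx
        show H q m • x ∈ Wsp
        rw [hH_nu q m]
        exact hnuact 0 1 (-1) x hx
      · intro x hx
        show Hi q m • x ∈ Wsp
        rw [hHi_nu q m]
        exact hnuact 0 (-1) 1 x hx
    | algebraMap r => intro x hx; rw [← hcomp]; exact Wsp.smul_mem r hx
    | add y z hy hz ihy ihz => intro x hx; rw [add_smul]; exact add_mem (ihy x hx) (ihz x hx)
    | mul y z hy hz ihy ihz => intro x hx; rw [mul_smul]; exact ihy _ (ihz x hx)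
  have hWtop : ∀ x : V, x ∈ Wsp := by
    intro x
    obtain ⟨u, rfl⟩ := hcyc x
    have hw1 : w ∈ Wsp := by
      have h0 := hmemW 0 0 0
      rwa [nu_one, one_smul] at h0
    exact hstab u w hw1
  have hzp : ∀ d : ℤ, d ≠ 0 → ((q:ℂ) ^ 2) ^ d ≠ 1 := by
    intro d hd hcon
    cases d with
    | ofNat n =>
      have hn : n ≠ 0 := by simpa using hd
      rw [Int.ofNat_eq_coe, zpow_natCast, ← pow_mul] at hcon
      exact hq (2 * n) (by omega) hcon
    | negSucc n =>
      rw [zpow_negSucc, inv_eq_one, ← pow_mul] at hcon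
      exact hq (2 * (n+1)) (by omega) hcon
  have hlam : ∀ d : ℤ, d ≠ 0 → (((q:ℂ) ^ 2)⁻¹) ^ d * c ≠ c := by
    intro d hd hcon
    apply hzp (-d) (neg_ne_zero.mpr hd)
    have h1 : (((q:ℂ) ^ 2)⁻¹) ^ d = 1 := mul_right_cancel₀ hc (hcon.trans (one_mul c).symm)
    rw [inv_zpow, ← zpow_neg] at h1
    exact h1
  set ES : Submodule ℂ V := ⨆ (μ : ℂ) (_ : μ ≠ c), Module.End.eigenspace Ee μ with hES
  set W0 : Submodule ℂ V :=
    Submodule.span ℂ {x | ∃ (a : ℕ) (b : ℤ), nu q m a b 0 • w = x} with hW0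
  have hW0eig : W0 ≤ Module.End.eigenspace Ee c := by
    rw [hW0, Submodule.span_le]
    rintro x ⟨a, b, rfl⟩
    rw [SetLike.mem_coe, Module.End.mem_eigenspace_iff]
    have h0 := hEnu a b 0
    rw [zpow_zero, one_mul] at h0
    exact h0
  have hsubW : Wsp ≤ W0 ⊔ ES := by
    rw [hWsp, Submodule.span_le]
    rintro x ⟨a, b, d, rfl⟩
    by_cases hd : d = 0
    · subst hd
      exact SetLike.mem_coe.mpr (Submodule.mem_sup_left (Submodule.subset_span ⟨a, b, rfl⟩))
    · have hx : nu q m a b d • w ∈ Module.End.eigenspace Ee ((((q:ℂ)^2)⁻¹) ^ d * c) :=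
        Module.End.mem_eigenspace_iff.mpr (hEnu a b d)
      have hle : Module.End.eigenspace Ee ((((q:ℂ)^2)⁻¹) ^ d * c) ≤ ES :=
        le_iSup₂ (f := fun (μ : ℂ) (_ : μ ≠ c) => Module.End.eigenspace Ee μ) _ (hlam d hd)
      exact SetLike.mem_coe.mpr (Submodule.mem_sup_right (hle hx))
  obtain ⟨x0, hx0, y, hy, hxy⟩ := Submodule.mem_sup.mp (hsubW (hWtop v))
  have hvE : v ∈ Module.End.eigenspace Ee c := Module.End.mem_eigenspace_iff.mpr hv
  have hyE : y ∈ Module.End.eigenspace Ee c := by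
    have hyv : y = v - x0 := by rw [← hxy]; abel
    rw [hyv]
    exact sub_mem hvE (hW0eig hx0)
  have hy0 : y = 0 := by
    have hdisj := Module.End.eigenspaces_iSupIndep Ee c
    exact Submodule.disjoint_def.mp hdisj y hyE hy
  have hvx0 : v = x0 := by rw [← hxy, hy0, add_zero]
  have hfin : ∀ x, x ∈ W0 → ∃ u ∈ Subalgebra.center ℂ (Um q m), u • w = x := by
    intro x hx
    rw [hW0] at hx
    induction hx using Submodule.span_induction with
    | mem y hy =>
      obtain ⟨a, b, rfl⟩ := hy
      exact ⟨nu q m a b 0, nu_central q m hq0 hq hm a b, rfl⟩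
    | zero => exact ⟨0, zero_mem _, zero_smul _ _⟩
    | add y z hy hz ihy ihz =>
      obtain ⟨u1, hu1, e1⟩ := ihy
      obtain ⟨u2, hu2, e2⟩ := ihz
      exact ⟨u1 + u2, add_mem hu1 hu2, by rw [add_smul, e1, e2]⟩
    | smul r y hy ih =>
      obtain ⟨u1, hu1, e1⟩ := ih
      exact ⟨r • u1, Subalgebra.smul_mem _ hu1 r, by rw [hsm, e1]⟩
  obtain ⟨u, hu, he⟩ := hfin x0 hx0
  exact ⟨u, hu, by rw [he, hvx0]⟩


end S18
end S18

/-- Let `V` be a Whittaker module of type `c` with cyclic Whittaker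
vector `w`. A nonzero `v ∈ V` satisfies `E • v = c • v` iff `v = u • w` for some
`u` in the center `Z(U)`. -/
theorem stmt18 (q : ℂ) (hq0 : q ≠ 0) (hq : ∀ n : ℕ, 0 < n → q ^ n ≠ 1)
    (m : ℕ) (hm : 1 ≤ m) (c : ℂ) (hc : c ≠ 0)
    (V : Type*) [AddCommGroup V] [Module (Um q m) V]
    (w : V) (hw : IsWhittakerVector q m c w)
    (hcyc : ∀ x : V, ∃ u : Um q m, u • w = x) :
    ∀ v : V, v ≠ 0 →
      (uE q (fm q m) • v = algebraMap ℂ (Um q m) c • v ↔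
        ∃ u ∈ Subalgebra.center ℂ (Um q m), u • w = v) := by
  letI : Module ℂ V := Module.compHom V (algebraMap ℂ (Um q m))
  have hcomp : ∀ (a : ℂ) (x : V), a • x = (algebraMap ℂ (Um q m) a) • x := fun a x => rfl
  intro v hv0
  constructor
  · intro hEv
    have hww : S18.E q m • w = c • w := by rw [hcomp]; exact hw.2
    have hv' : S18.E q m • v = c • v := by rw [hcomp]; exact hEv
    exact S18.key q m hq0 hq hm hc hcomp hww hcyc hv'
  · rintro ⟨u, hu, rfl⟩
    have h1 : uE q (fm q m) * u = u * uE q (fm q m) := Subalgebra.mem_center_iff.mp hu _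
    calc uE q (fm q m) • u • w = (uE q (fm q m) * u) • w := (mul_smul _ _ _).symm
      _ = (u * uE q (fm q m)) • w := by rw [h1]
      _ = u • (uE q (fm q m) • w) := mul_smul _ _ _
      _ = u • (algebraMap ℂ (Um q m) c • w) := by rw [hw.2]
      _ = (u * algebraMap ℂ (Um q m) c) • w := (mul_smul _ _ _).symm
      _ = (algebraMap ℂ (Um q m) c * u) • w := by rw [← Algebra.commutes]
      _ = algebraMap ℂ (Um q m) c • (u • w) := mul_smul _ _ _
end
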